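/- arXiv:0912.1659 — 9 statements merged into one kernel-verified Lean document; each statement's English description precedes it below -/
import Mathlib

section
/- For every integer k ≥ 0, the number of elements z in ℤ[√-3] (i.e., Gaussian-type integers a + b√-3 with a, b ∈ ℤ) satisfying |z|² = 7^k is exactly 2(k+1). -/
/-!
By descent, every element of norm `7 ^ k` is `±(2 + √-3) ^ i (2 - √-3) ^ j` with `i + j = k`:
if `7 ∣ a² + 3b²` then `a ≡ ±2b (mod 7)`, so `2 + √-3` or its conjugate divides `a + b√-3`,
and the quotient has norm `7 ^ (k - 1)`. These `2(k + 1)` products are pairwise distinct, since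
reducing modulo `2 - √-3` (that is, `√-3 ↦ 2` in `ZMod 7`) kills the conjugate but not `2 + √-3`.
-/

open Zsqrtd

theorem Zsqrtd.noZeroDivisors_of_neg {d : ℤ} (hd : d < 0) : NoZeroDivisors (ℤ√d) where
  eq_zero_or_eq_zero_of_mul_eq_zero {a b} h := by
    simpa [norm_mul, norm_eq_zero_iff hd] using congrArg norm h

instance : IsDomain (ℤ√(-3)) :=
  @NoZeroDivisors.to_isDomain _ _ _ (noZeroDivisors_of_neg (by norm_num))

theorem norm_mk_neg_three (a b : ℤ) : (⟨a, b⟩ : ℤ√(-3)).norm = a ^ 2 + 3 * b ^ 2 := by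
  rw [norm_def]; ring

theorem eq_one_or_eq_neg_one_of_norm_eq_one {z : ℤ√(-3)} (hz : z.norm = 1) : z = 1 ∨ z = -1 := by
  obtain ⟨a, b⟩ := z
  rw [norm_mk_neg_three] at hz
  have hb : b = 0 := by nlinarith [sq_nonneg a, sq_nonneg b]
  subst hb
  simp only [ne_eq, OfNat.ofNat_ne_zero, not_false_eq_true, zero_pow, mul_zero, add_zero,
    sq_eq_one_iff] at hz
  rcases hz with rfl | rfl
  · exact .inl rfl
  · exact .inr rfl

def α : ℤ√(-3) := ⟨2, 1⟩

theorem norm_α : α.norm = 7 := rfl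

theorem α_ne_zero : α ≠ 0 := by decide

theorem α_dvd_of_seven_dvd {z : ℤ√(-3)} (h : (7 : ℤ) ∣ z.re - 2 * z.im) : α ∣ z := by
  obtain ⟨t, ht⟩ := h
  -- `(2 + √-3)(c + d√-3) = (2c - 3d) + (c + 2d)√-3`
  refine ⟨⟨z.im + 2 * t, -t⟩, ?_⟩
  ext <;> simp [α]; linarith

theorem sq_add_three_sq_eq_zero_zmod_seven :
    ∀ x y : ZMod 7, x ^ 2 + 3 * y ^ 2 = 0 → x - 2 * y = 0 ∨ x + 2 * y = 0 := by
  decide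

theorem α_dvd_or_star_α_dvd {z : ℤ√(-3)} (h : (7 : ℤ) ∣ z.norm) : α ∣ z ∨ star α ∣ z := by
  have hmod : (z.re : ZMod 7) ^ 2 + 3 * (z.im : ZMod 7) ^ 2 = 0 := by
    have := (ZMod.intCast_zmod_eq_zero_iff_dvd _ 7).2 h
    rw [norm_def] at this
    push_cast at this
    linear_combination this
  rcases sq_add_three_sq_eq_zero_zmod_seven _ _ hmod with h7 | h7
  · left
    apply α_dvd_of_seven_dvd
    exact (ZMod.intCast_zmod_eq_zero_iff_dvd _ 7).1 (by push_cast; exact h7)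
  · right
    obtain ⟨w, hw⟩ := α_dvd_of_seven_dvd (z := star z) <|
      (ZMod.intCast_zmod_eq_zero_iff_dvd _ 7).1 <| by
        push_cast [re_star, im_star]
        linear_combination h7
    exact ⟨star w, by rw [← star_star z, hw, star_mul']⟩

theorem norm_eq_seven_pow_of_norm_mul {p w : ℤ√(-3)} (hp : p.norm = 7) {k : ℕ}
    (h : (p * w).norm = 7 ^ (k + 1)) : w.norm = 7 ^ k := by
  rw [norm_mul, hp, pow_succ'] at h
  exact mul_left_cancel₀ (by norm_num) h

theorem exists_eq_of_norm_eq_seven_pow (k : ℕ) {z : ℤ√(-3)} (hz : z.norm = 7 ^ k) :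
    ∃ i j, i + j = k ∧ ∃ ε : ℤ√(-3), (ε = 1 ∨ ε = -1) ∧ z = ε * α ^ i * star α ^ j := by
  induction k generalizing z with
  | zero => exact ⟨0, 0, rfl, z, eq_one_or_eq_neg_one_of_norm_eq_one hz, by simp⟩
  | succ k ih =>
    have h7 : (7 : ℤ) ∣ z.norm := hz ▸ dvd_pow_self 7 k.succ_ne_zero
    rcases α_dvd_or_star_α_dvd h7 with ⟨w, rfl⟩ | ⟨w, rfl⟩
    · obtain ⟨i, j, hij, ε, hε, rfl⟩ := ih (norm_eq_seven_pow_of_norm_mul norm_α hz)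
      exact ⟨i + 1, j, by omega, ε, hε, by ring⟩
    · obtain ⟨i, j, hij, ε, hε, rfl⟩ :=
        ih (norm_eq_seven_pow_of_norm_mul (by rw [norm_conj, norm_α]) hz)
      exact ⟨i, j + 1, by omega, ε, hε, by ring⟩

theorem norm_unit_mul_α_pow_mul_star_α_pow {ε : ℤ√(-3)} (hε : IsUnit ε) (i j : ℕ) :
    (ε * α ^ i * star α ^ j).norm = 7 ^ (i + j) := by
  have hpow (x : ℤ√(-3)) (n : ℕ) : (x ^ n).norm = x.norm ^ n := map_pow normMonoidHom x n
  rw [norm_mul, norm_mul, (norm_eq_one_iff' (by norm_num) ε).2 hε, hpow, hpow, norm_conj, norm_α,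
    one_mul, pow_add]

instance : Fact (Nat.Prime 7) := ⟨by norm_num⟩

/-- Reduction modulo `star α = 2 - √-3`. -/
def toZModSeven : ℤ√(-3) →+* ZMod 7 := lift ⟨2, by decide⟩

theorem toZModSeven_α : toZModSeven α = 4 := by
  simp [toZModSeven, α]; decide

theorem toZModSeven_star_α : toZModSeven (star α) = 0 := by
  simp [toZModSeven, α, star_mk]

theorem mul_star_α_pow_ne_unit_mul_α_pow (ε : ℤ√(-3)) {ε' : ℤ√(-3)} (hε' : IsUnit ε')
    {d : ℕ} (hd : d ≠ 0) : ε * star α ^ d ≠ ε' * α ^ d := by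
  intro h
  have h7 := congrArg toZModSeven h
  rw [map_mul, map_mul, map_pow, map_pow, toZModSeven_star_α, toZModSeven_α, zero_pow hd,
    mul_zero, eq_comm] at h7
  have : (4 : ZMod 7) ≠ 0 := by decide
  exact mul_ne_zero (hε'.map toZModSeven).ne_zero (pow_ne_zero d this) h7

theorem eq_of_unit_mul_α_pow_mul_star_α_pow_eq {ε ε' : ℤ√(-3)} (hε : IsUnit ε) (hε' : IsUnit ε')
    {i j i' j' : ℕ} (hk : i + j = i' + j')
    (h : ε * α ^ i * star α ^ j = ε' * α ^ i' * star α ^ j') : i = i' ∧ ε = ε' := by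
  wlog hii : i ≤ i' generalizing ε ε' i j i' j'
  · obtain ⟨h1, h2⟩ := this hε' hε hk.symm h.symm (by omega)
    exact ⟨h1.symm, h2.symm⟩
  obtain ⟨d, rfl⟩ := Nat.exists_eq_add_of_le hii
  obtain rfl : j = j' + d := by omega
  have hcancel : ε * star α ^ d = ε' * α ^ d := by
    refine mul_left_cancel₀ (a := α ^ i * star α ^ j') (by simp [α_ne_zero]) ?_
    linear_combination h
  rcases eq_or_ne d 0 with rfl | hd
  · simpa using hcancel
  · exact absurd hcancel (mul_star_α_pow_ne_unit_mul_α_pow ε hε' hd)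

open Finset.HasAntidiagonal in
theorem ncard_norm_eq_seven_pow (k : ℕ) :
    {z : ℤ√(-3) | z.norm = 7 ^ k}.ncard = 2 * (k + 1) := by
  classical
  let f : (ℕ × ℕ) × ℤ√(-3) → ℤ√(-3) := fun p => p.2 * α ^ p.1.1 * star α ^ p.1.2
  have hunit {ε : ℤ√(-3)} (hε : ε = 1 ∨ ε = -1) : IsUnit ε := by
    rcases hε with rfl | rfl <;> simp
  have himage : {z : ℤ√(-3) | z.norm = 7 ^ k} = (antidiagonal k ×ˢ {1, -1}).image f := by
    ext z
    simp only [Set.mem_ofPred_eq, Finset.coe_image, Set.mem_image, Finset.mem_coe,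
      Finset.mem_product, mem_antidiagonal, Finset.mem_insert, Finset.mem_singleton,
      Prod.exists, f]
    constructor
    · intro hz
      obtain ⟨i, j, hij, ε, hε, rfl⟩ := exists_eq_of_norm_eq_seven_pow k hz
      exact ⟨i, j, ε, ⟨hij, hε⟩, rfl⟩
    · rintro ⟨i, j, ε, ⟨rfl, hε⟩, rfl⟩
      exact norm_unit_mul_α_pow_mul_star_α_pow (hunit hε) i j
  rw [himage, Set.ncard_coe_finset, Finset.card_image_of_injOn, Finset.card_product,
    Finset.Nat.card_antidiagonal, Finset.card_pair (by decide), mul_comm]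
  rintro ⟨⟨i, j⟩, ε⟩ hp ⟨⟨i', j'⟩, ε'⟩ hq h
  simp only [Finset.coe_product, Set.mem_prod, Finset.mem_coe, mem_antidiagonal,
    Finset.mem_insert, Finset.mem_singleton] at hp hq
  obtain ⟨rfl, rfl⟩ := eq_of_unit_mul_α_pow_mul_star_α_pow_eq (hunit hp.2) (hunit hq.2)
    (hp.1.trans hq.1.symm) h
  obtain rfl : j = j' := by omega
  rfl

/-- For every integer `k ≥ 0`, the number of elements `z = a + b√-3` of `ℤ[√-3]`
with `|z|² = a² + 3b² = 7^k` is exactly `2(k+1)`. -/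
theorem stmt_0 (k : ℕ) :
    Set.ncard {z : ℤ × ℤ | z.1 ^ 2 + 3 * z.2 ^ 2 = 7 ^ k} = 2 * (k + 1) := by
  let mk : ℤ × ℤ → ℤ√(-3) := fun p => ⟨p.1, p.2⟩
  have hmk : Function.Bijective mk :=
    ⟨fun p q h => Prod.ext (congrArg re h) (congrArg im h), fun z => ⟨(z.re, z.im), rfl⟩⟩
  have hpre : {z : ℤ × ℤ | z.1 ^ 2 + 3 * z.2 ^ 2 = 7 ^ k} = mk ⁻¹' {z | z.norm = 7 ^ k} := by
    ext p
    simp [mk, norm_mk_neg_three]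
  rw [hpre, Set.ncard_preimage_of_injective_subset_range hmk.1 (by simp [hmk.2.range_eq]),
    ncard_norm_eq_seven_pow]
end

section
/- Let n ≥ 2 be an integer and write ℤ[√-n] as the order O_f of conductor f in the imaginary quadratic field K = ℚ(√-n) with discriminant d_K. Let p be a prime such that there exists z ∈ ℤ[√-n] with |z|² = p, the Legendre symbol (d_K/p) = 1, and gcd(p, f) = 1. Then for every integer k ≥ 0, the number of z ∈ ℤ[√-n] with |z|² = p^k is exactly 2(k+1). -/
/-- `dK` is a fundamental discriminant (discriminant of a quadratic field). -/
def IsFundamentalDiscriminant (dK : ℤ) : Prop :=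
  (Squarefree dK ∧ dK % 4 = 1) ∨
    (∃ m : ℤ, dK = 4 * m ∧ Squarefree m ∧ (m % 4 = 2 ∨ m % 4 = 3))

/-!
Write `p = w w̄` with `w = a + b√-n`. The discriminant hypotheses give `p ∤ 2n`, so `√-n ↦ a/b`
defines a ring map `φ : ℤ[√-n] → 𝔽_p` with `φ w̄ = 0 ≠ φ w`. An element killed by both `φ` and
`φ ∘ conj` is divisible by `p = w w̄`, so `φ z = 0` forces `w̄ ∣ z`; as `φ(z z̄) = φ(N z)`,
every `z` with `p ∣ N z` is divisible by `w` or `w̄`. Induction on `k`, with units `±1`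
(as `n ≥ 2`), shows that the elements of norm `p^k` are `±wⁱw̄ʲ` with `i + j = k`, and applying
`φ` after cancelling common factors separates these `2(k + 1)` elements.
-/

open Finset.HasAntidiagonal

namespace Zsqrtd

variable {d : ℤ}

theorem isLeftRegular_of_norm_ne_zero {a : ℤ√d} (ha : a.norm ≠ 0) : IsLeftRegular a := by
  intro b c h
  have hnorm : (a.norm : ℤ√d) * b = a.norm * c := by
    rw [norm_eq_mul_conj, mul_comm a, mul_assoc, mul_assoc]
    exact congrArg _ h
  ext
  · simpa [ha] using congrArg re hnorm
  · simpa [ha] using congrArg im hnorm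

theorem norm_pow (z : ℤ√d) (k : ℕ) : (z ^ k).norm = z.norm ^ k :=
  map_pow normMonoidHom z k

theorem exists_unit_eq_intCast_of_norm_eq_one (hd : d < -1) {z : ℤ√d} (hz : z.norm = 1) :
    ∃ u : ℤˣ, z = ((u : ℤ) : ℤ√d) := by
  rw [norm_def] at hz
  have him : z.im = 0 := by nlinarith [mul_self_nonneg z.re, mul_self_nonneg z.im]
  have hre : IsUnit z.re := IsUnit.of_mul_eq_one _ (by simpa [him] using hz)
  exact ⟨hre.unit, by ext <;> simp [him]⟩

theorem ringHom_apply {R : Type*} [CommRing R] (φ : ℤ√d →+* R) (z : ℤ√d) :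
    φ z = z.re + z.im * φ sqrtd := by
  conv_lhs => rw [← lift.apply_symm_apply φ]
  rfl

theorem not_natCast_dvd_of_norm_eq_prime {p : ℕ} (hp : p.Prime) {w : ℤ√d} (hw : w.norm = p) :
    ¬ (p : ℤ√d) ∣ w := by
  rintro ⟨v, rfl⟩
  rw [norm_mul, norm_natCast, mul_assoc] at hw
  have hp1 : (p : ℤ) * v.norm = 1 :=
    mul_left_cancel₀ (Int.natCast_ne_zero.mpr hp.ne_zero) (by rw [hw, mul_one])
  exact hp.ne_one (by exact_mod_cast Int.eq_one_of_mul_eq_one_right (by positivity) hp1)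

variable {p : ℕ} [Fact p.Prime] {w : ℤ√d}

theorem exists_ringHom_zmod_map_ne_zero_map_star_eq_zero (hpd : ¬ (p : ℤ) ∣ 2 * d)
    (hw : w.norm = p) : ∃ φ : ℤ√d →+* ZMod p, φ w ≠ 0 ∧ φ (star w) = 0 := by
  have h2d : (2 : ZMod p) * d ≠ 0 := by
    rw [← ZMod.intCast_zmod_eq_zero_iff_dvd] at hpd
    exact_mod_cast hpd
  have hnorm : (w.re : ZMod p) * w.re = d * w.im * w.im := by
    have := congrArg (Int.cast : ℤ → ZMod p) hw
    push_cast [norm_def, ZMod.natCast_self] at this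
    linear_combination this
  have hw0 : ¬ ((w.re : ZMod p) = 0 ∧ (w.im : ZMod p) = 0) := by
    simp only [ZMod.intCast_zmod_eq_zero_iff_dvd, ← intCast_dvd, Int.cast_natCast]
    exact not_natCast_dvd_of_norm_eq_prime Fact.out hw
  have him : (w.im : ZMod p) ≠ 0 := fun h => hw0 ⟨by simpa [h] using hnorm, h⟩
  have hre : (w.re : ZMod p) ≠ 0 := fun h =>
    hw0 ⟨h, by simpa [h, right_ne_zero_of_mul h2d, mul_assoc] using hnorm⟩
  refine ⟨lift ⟨w.re / w.im, by field_simp; linear_combination hnorm⟩, ?_, ?_⟩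
  · simp only [lift_apply_apply]
    field_simp
    rw [one_add_one_eq_two]
    exact mul_ne_zero hre (left_ne_zero_of_mul h2d)
  · simp only [lift_apply_apply, re_star, im_star, Int.cast_neg]
    field_simp
    ring

theorem isLeftRegular_of_norm_eq (hw : w.norm = p) : IsLeftRegular w :=
  isLeftRegular_of_norm_ne_zero (by rw [hw]; exact_mod_cast (Fact.out : p.Prime).ne_zero)

theorem isLeftRegular_pow_mul_star_pow (hw : w.norm = p) (i j : ℕ) :
    IsLeftRegular (w ^ i * star w ^ j) :=
  ((isLeftRegular_of_norm_eq hw).pow i).mul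
    ((isLeftRegular_of_norm_eq ((norm_conj w).trans hw)).pow j)

section Factorization

variable {φ : ℤ√d →+* ZMod p}

theorem natCast_dvd_of_map_eq_zero (hφw : φ w ≠ 0) (hφw' : φ (star w) = 0) {z : ℤ√d}
    (hz : φ z = 0) (hz' : φ (star z) = 0) : (p : ℤ√d) ∣ z := by
  rw [ringHom_apply] at hφw hφw' hz hz'
  simp only [re_star, im_star, Int.cast_neg, neg_mul] at hφw' hz'
  -- `φ w - φ w̄ = 2 (im w) φ(√d)`, so `2` and `φ √d` are invertible and `φ z ± φ z̄` recover `z`.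
  have h2s : (2 : ZMod p) * w.im * φ sqrtd ≠ 0 := by
    convert hφw using 1
    linear_combination -hφw'
  have h2 : (2 : ZMod p) ≠ 0 := left_ne_zero_of_mul (left_ne_zero_of_mul h2s)
  have hs : φ sqrtd ≠ 0 := right_ne_zero_of_mul h2s
  have hre : (z.re : ZMod p) = 0 := by
    have : (2 : ZMod p) * z.re = 0 := by linear_combination hz + hz'
    simpa [h2] using this
  have him : (z.im : ZMod p) = 0 := by
    have : (2 : ZMod p) * φ sqrtd * z.im = 0 := by linear_combination hz - hz'
    simpa [h2, hs] using this
  rw [← Int.cast_natCast, intCast_dvd]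
  exact ⟨(ZMod.intCast_zmod_eq_zero_iff_dvd _ _).mp hre,
    (ZMod.intCast_zmod_eq_zero_iff_dvd _ _).mp him⟩

theorem star_dvd_of_map_eq_zero (hw : w.norm = p) (hφw : φ w ≠ 0) (hφw' : φ (star w) = 0)
    {z : ℤ√d} (hz : φ z = 0) : star w ∣ z := by
  obtain ⟨v, hv⟩ : (p : ℤ√d) ∣ z * w :=
    natCast_dvd_of_map_eq_zero hφw hφw' (by simp [hz]) (by simp [hφw'])
  have hp : (p : ℤ√d) = w * star w := by rw [← norm_eq_mul_conj, hw, Int.cast_natCast]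
  refine ⟨v, isLeftRegular_of_norm_eq hw ?_⟩
  change w * z = w * _
  rw [mul_comm w z, hv, hp]
  ring

theorem dvd_or_star_dvd_of_dvd_norm (hw : w.norm = p) (hφw : φ w ≠ 0)
    (hφw' : φ (star w) = 0) {z : ℤ√d} (hz : (p : ℤ) ∣ z.norm) : w ∣ z ∨ star w ∣ z := by
  have : φ z * φ (star z) = 0 := by
    obtain ⟨m, hm⟩ := hz
    rw [← map_mul, ← norm_eq_mul_conj, hm]
    simp
  rcases mul_eq_zero.mp this with h | h
  · exact Or.inr (star_dvd_of_map_eq_zero hw hφw hφw' h)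
  · obtain ⟨v, hv⟩ := star_dvd_of_map_eq_zero hw hφw hφw' h
    exact Or.inl ⟨star v, by simpa [mul_comm] using congrArg star hv⟩

theorem exists_eq_unit_mul_pow_mul_star_pow (hd : d < -1) (hw : w.norm = p) (hφw : φ w ≠ 0)
    (hφw' : φ (star w) = 0) (k : ℕ) {z : ℤ√d} (hz : z.norm = (p : ℤ) ^ k) :
    ∃ u : ℤˣ, ∃ ij ∈ antidiagonal k, z = (u : ℤ) * w ^ ij.1 * star w ^ ij.2 := by
  induction k generalizing z with
  | zero =>
    obtain ⟨u, rfl⟩ := exists_unit_eq_intCast_of_norm_eq_one hd (by simpa using hz)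
    exact ⟨u, (0, 0), by simp, by simp⟩
  | succ k ih =>
    have hp0 : (p : ℤ) ≠ 0 := by exact_mod_cast (Fact.out : p.Prime).ne_zero
    have hnorm {c v : ℤ√d} (hc : c.norm = p) (hv : (c * v).norm = (p : ℤ) ^ (k + 1)) :
        v.norm = (p : ℤ) ^ k :=
      mul_left_cancel₀ hp0 (by rw [← hc, ← norm_mul, hv, hc, pow_succ'])
    rcases dvd_or_star_dvd_of_dvd_norm hw hφw hφw' (hz ▸ dvd_pow_self _ k.succ_ne_zero) with
      ⟨v, rfl⟩ | ⟨v, rfl⟩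
    · obtain ⟨u, ⟨i, j⟩, hij, rfl⟩ := ih (hnorm hw hz)
      refine ⟨u, (i + 1, j), ?_, by ring⟩
      simp_all only [mem_antidiagonal]
      omega
    · obtain ⟨u, ⟨i, j⟩, hij, rfl⟩ := ih (hnorm ((norm_conj w).trans hw) hz)
      refine ⟨u, (i, j + 1), ?_, by ring⟩
      simp_all only [mem_antidiagonal]
      omega

theorem intCast_unit_mul_pow_mul_star_pow_ne (hw : w.norm = p) (hφw : φ w ≠ 0)
    (hφw' : φ (star w) = 0) (u u' : ℤˣ) (i j : ℕ) {m : ℕ} (hm : m ≠ 0) :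
    (u : ℤ) * w ^ i * star w ^ (j + m) ≠ (u' : ℤ) * w ^ (i + m) * star w ^ j := by
  intro h
  have hcancel : (u : ℤ) * star w ^ m = ((u' : ℤ) : ℤ√d) * w ^ m :=
    isLeftRegular_pow_mul_star_pow hw i j (by linear_combination h)
  have hu' : ((u' : ℤ) : ZMod p) ≠ 0 := by
    rcases Int.units_eq_one_or u' with rfl | rfl <;> simp
  simpa [hφw', hm, hu', hφw] using congrArg φ hcancel

theorem injOn_intCast_unit_mul_pow_mul_star_pow (hw : w.norm = p) (hφw : φ w ≠ 0)
    (hφw' : φ (star w) = 0) (k : ℕ) :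
    Set.InjOn (fun q : ℤˣ × ℕ × ℕ => (q.1 : ℤ) * w ^ q.2.1 * star w ^ q.2.2)
      ↑((Finset.univ : Finset ℤˣ) ×ˢ antidiagonal k) := by
  rintro ⟨u, i, j⟩ hq ⟨u', i', j'⟩ hq' h
  simp only [Finset.coe_product, Finset.coe_univ, Set.mem_prod, Set.mem_univ, true_and,
    Finset.mem_coe, mem_antidiagonal] at hq hq' h
  rcases lt_trichotomy i i' with hi | rfl | hi
  · obtain ⟨m, rfl⟩ := Nat.exists_eq_add_of_lt hi
    obtain rfl : j = j' + (m + 1) := by omega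
    exact absurd h (intCast_unit_mul_pow_mul_star_pow_ne hw hφw hφw' u u' i j' m.succ_ne_zero)
  · obtain rfl : j = j' := by omega
    have : ((u : ℤ) : ℤ√d) = u' :=
      isLeftRegular_pow_mul_star_pow hw i j (by linear_combination h)
    rw [Units.ext (Int.cast_injective this)]
  · obtain ⟨m, rfl⟩ := Nat.exists_eq_add_of_lt hi
    obtain rfl : j' = j + (m + 1) := by omega
    exact absurd h.symm (intCast_unit_mul_pow_mul_star_pow_ne hw hφw hφw' u' u i' j m.succ_ne_zero)

theorem ncard_setOf_norm_eq_pow (hd : d < -1) (hw : w.norm = p) (hφw : φ w ≠ 0)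
    (hφw' : φ (star w) = 0) (k : ℕ) :
    {z : ℤ√d | z.norm = (p : ℤ) ^ k}.ncard = 2 * (k + 1) := by
  classical
  have hset : {z : ℤ√d | z.norm = (p : ℤ) ^ k} =
      ↑(((Finset.univ : Finset ℤˣ) ×ˢ antidiagonal k).image
        fun q : ℤˣ × ℕ × ℕ => (q.1 : ℤ) * w ^ q.2.1 * star w ^ q.2.2) := by
    ext z
    simp only [Set.mem_ofPred_eq, Finset.coe_image, Set.mem_image, Finset.coe_product,
      Finset.coe_univ, Set.mem_prod, Set.mem_univ, true_and, Finset.mem_coe, Prod.exists]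
    constructor
    · intro hz
      obtain ⟨u, ⟨i, j⟩, hij, rfl⟩ := exists_eq_unit_mul_pow_mul_star_pow hd hw hφw hφw' k hz
      exact ⟨u, i, j, hij, rfl⟩
    · rintro ⟨u, i, j, hij, rfl⟩
      rw [mem_antidiagonal] at hij
      simp [norm_pow, hw, ← hij, pow_add]
  rw [hset, Set.ncard_coe_finset,
    Finset.card_image_of_injOn (injOn_intCast_unit_mul_pow_mul_star_pow hw hφw hφw' k),
    Finset.card_product, Finset.card_univ, Fintype.card_units_int, Finset.Nat.card_antidiagonal]

end Factorization

theorem ncard_setOf_sq_add_mul_sq_eq (n m : ℤ) :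
    {z : ℤ × ℤ | z.1 ^ 2 + n * z.2 ^ 2 = m}.ncard = {z : ℤ√(-n) | z.norm = m}.ncard := by
  have hinj : Function.Injective fun z : ℤ√(-n) => (z.re, z.im) :=
    fun z z' h => Zsqrtd.ext (congrArg Prod.fst h) (congrArg Prod.snd h)
  rw [← Set.ncard_image_of_injective _ hinj]
  congr 1
  ext ⟨x, y⟩
  simp only [Set.mem_ofPred_eq, Set.mem_image, Prod.mk.injEq, norm_def]
  constructor
  · intro h
    exact ⟨⟨x, y⟩, by linear_combination h, rfl, rfl⟩
  · rintro ⟨z, hz, rfl, rfl⟩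
    linear_combination hz

end Zsqrtd

theorem not_natCast_dvd_four_mul {n f dK : ℤ} {p : ℕ} [Fact p.Prime] (hdisc : -4 * n = f ^ 2 * dK)
    (hleg : legendreSym p dK = 1) (hpf : IsCoprime (p : ℤ) f) : ¬ (p : ℤ) ∣ 4 * n := by
  have hp : Prime (p : ℤ) := Nat.prime_iff_prime_int.mp Fact.out
  intro h
  have hdvd : (p : ℤ) ∣ f ^ 2 * dK := by rw [← hdisc, neg_mul]; exact h.neg_right
  rcases hp.dvd_mul.mp hdvd with hf | hdK
  · exact hp.not_isUnit (hpf.isUnit_of_dvd' dvd_rfl (hp.dvd_of_dvd_pow hf))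
  · have := (legendreSym.eq_zero_iff p dK).mpr ((ZMod.intCast_zmod_eq_zero_iff_dvd dK p).mpr hdK)
    exact one_ne_zero (hleg.symm.trans this)

theorem stmt_1_general (n : ℕ) (hn : 2 ≤ n) (f dK : ℤ)
    (hdisc : -4 * (n : ℤ) = f ^ 2 * dK)
    (p : ℕ) [Fact p.Prime]
    (hrep : ∃ x y : ℤ, x ^ 2 + n * y ^ 2 = p)
    (hleg : legendreSym p dK = 1)
    (hpf : IsCoprime (p : ℤ) f) (k : ℕ) :
    Set.ncard {z : ℤ × ℤ | z.1 ^ 2 + n * z.2 ^ 2 = (p : ℤ) ^ k} = 2 * (k + 1) := by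
  obtain ⟨a, b, hab⟩ := hrep
  have hpd : ¬ (p : ℤ) ∣ 2 * -(n : ℤ) := fun h => not_natCast_dvd_four_mul hdisc hleg hpf <| by
    rw [show 4 * (n : ℤ) = -2 * (2 * -n) by ring]
    exact h.mul_left _
  have hw : (⟨a, b⟩ : ℤ√(-(n : ℤ))).norm = p := by
    rw [Zsqrtd.norm_def]; linear_combination hab
  obtain ⟨φ, hφw, hφw'⟩ := Zsqrtd.exists_ringHom_zmod_map_ne_zero_map_star_eq_zero hpd hw
  rw [Zsqrtd.ncard_setOf_sq_add_mul_sq_eq]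
  exact Zsqrtd.ncard_setOf_norm_eq_pow (by omega) hw hφw hφw' k

/-- Let `n ≥ 2`, and write `ℤ[√-n]` as the order of conductor `f` in the imaginary
quadratic field `K = ℚ(√-n)` with (fundamental) discriminant `d_K`, so that
`-4n = f² d_K`.  Let `p` be a prime such that some `z ∈ ℤ[√-n]` has `|z|² = p`,
`(d_K/p) = 1`, and `gcd(p,f) = 1`.  Then for every `k ≥ 0`, the number of
`z = x + y√-n ∈ ℤ[√-n]` with `|z|² = x² + n y² = p^k` is exactly `2(k+1)`. -/
theorem stmt_1 (n : ℕ) (hn : 2 ≤ n) (f dK : ℤ) (hf : 0 < f)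
    (hdisc : -4 * (n : ℤ) = f ^ 2 * dK) (hfund : IsFundamentalDiscriminant dK)
    (p : ℕ) [Fact p.Prime]
    (hrep : ∃ x y : ℤ, x ^ 2 + n * y ^ 2 = p)
    (hleg : legendreSym p dK = 1)
    (hpf : IsCoprime (p : ℤ) f) (k : ℕ) :
    Set.ncard {z : ℤ × ℤ | z.1 ^ 2 + n * z.2 ^ 2 = (p : ℤ) ^ k} = 2 * (k + 1) :=
  stmt_1_general n hn f dK hdisc p hrep hleg hpf k
end

section
/- The standard lattice ℤ² ⊂ ℝ² is universally concyclic: for every positive integer n, there exists a circle in the plane ℝ² passing through exactly n points of ℤ². -/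
/-!
Schinzel's construction. A lattice point `(x, y)` lies on the circle with centre `(1/q, 0)` and
radius `√N / q` exactly when `z = q (x + y i) - 1` is a Gaussian integer of norm `N`; so these
lattice points correspond to the Gaussian integers of norm `N` that are `≡ -1 (mod q)`.

Since `5 = (2 + i)(2 - i)` with `2 ± i` non-associate primes, the Gaussian integers of norm `5^m`
are the `u (2 + i)^j (2 - i)^(m - j)` with `u` a unit and `j ≤ m`: there are `4 (m + 1)` of them.
For `N` odd, multiplication by `i` swaps the classes "`im` even" and "`im` odd", so half of
them are `≡ -1 (mod 2)`: `q = 2`, `N = 5^(k-1)` gives `2k` points. For `N ≡ 1 (mod 3)`, the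
residue of `z` mod 3 is one of `±1, ±i`; multiplication by `i` and negation permute these four
classes transitively, so a quarter are `≡ -1 (mod 3)`: `q = 3`, `N = 5^(2k)` gives `2k + 1`
points.
-/

open Set Zsqrtd

local notation "ℤ[i]" => GaussianInt

theorem Set.two_mul_ncard_inter_of_swap {α : Type*} {s t : Set α} (hs : s.Finite) {f : α → α}
    (hf : MapsTo f s s) (hinj : InjOn f s) (hft : ∀ x ∈ s, f x ∈ t ↔ x ∉ t) :
    2 * (s ∩ t).ncard = s.ncard := by
  have hle : (s ∩ t).ncard ≤ (s \ t).ncard :=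
    ncard_le_ncard_of_injOn f (fun x hx => ⟨hf hx.1, (hft x hx.1).not.2 (not_not.2 hx.2)⟩)
      (hinj.mono inter_subset_left) hs.sdiff
  have hge : (s \ t).ncard ≤ (s ∩ t).ncard :=
    ncard_le_ncard_of_injOn f (fun x hx => ⟨hf hx.1, (hft x hx.1).2 hx.2⟩)
      (hinj.mono sdiff_subset) (hs.inter_of_left t)
  have := ncard_inter_add_ncard_sdiff_eq_ncard s t hs
  omega

theorem Zsqrtd.irreducible_of_natAbs_norm_prime {d : ℤ} {z : ℤ√d} (h : z.norm.natAbs.Prime) :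
    Irreducible z := by
  refine ⟨fun hu => h.ne_one (norm_eq_one_iff.2 hu), fun x y hxy => ?_⟩
  rw [hxy, norm_mul, Int.natAbs_mul, Nat.prime_mul_iff] at h
  rw [← norm_eq_one_iff, ← norm_eq_one_iff]
  exact h.symm.imp And.right And.right

namespace GaussianInt

theorem finite_setOf_norm_eq (N : ℤ) : {z : ℤ[i] | z.norm = N}.Finite := by
  refine (((finite_Icc (-N) N).prod (finite_Icc (-N) N)).image
    fun p : ℤ × ℤ => (⟨p.1, p.2⟩ : ℤ[i])).subset fun z hz => ?_
  have hN : z.re * z.re + z.im * z.im = N := by simpa [norm_def] using hz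
  exact ⟨(z.re, z.im), ⟨⟨by nlinarith, by nlinarith⟩, ⟨by nlinarith, by nlinarith⟩⟩, rfl⟩

theorem intCast_re_sq_add_intCast_im_sq {q N : ℕ} {z : ℤ[i]} (hz : z.norm = N) :
    (z.re : ZMod q) ^ 2 + (z.im : ZMod q) ^ 2 = N := by
  have := congrArg (Int.cast : ℤ → ZMod q) hz
  simp only [norm_def] at this
  push_cast at this
  linear_combination this

theorem natCast_dvd_add_one_iff {q : ℕ} {z : ℤ[i]} :
    (q : ℤ[i]) ∣ z + 1 ↔ (z.re : ZMod q) + 1 = 0 ∧ (z.im : ZMod q) = 0 := by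
  rw [← Int.cast_natCast, intCast_dvd]
  simp [← ZMod.intCast_zmod_eq_zero_iff_dvd]

theorem mapsTo_sqrtd_mul (N : ℤ) :
    MapsTo (sqrtd * ·) {z : ℤ[i] | z.norm = N} {z : ℤ[i] | z.norm = N} :=
  fun z (hz : z.norm = N) => by
    change (sqrtd * z).norm = N
    rw [Zsqrtd.norm_mul, show (sqrtd : ℤ[i]).norm = 1 by decide, one_mul, hz]

theorem injective_sqrtd_mul : Function.Injective (sqrtd * · : ℤ[i] → ℤ[i]) :=
  mul_right_injective₀ (by decide)

def unitFinset : Finset ℤ[i] := {1, -1, sqrtd, -sqrtd}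

theorem card_unitFinset : unitFinset.card = 4 := by decide

theorem mem_unitFinset {u : ℤ[i]} : u ∈ unitFinset ↔ IsUnit u := by
  rw [← norm_eq_one_iff' (by norm_num)]
  constructor
  · intro hu
    simp only [unitFinset, Finset.mem_insert, Finset.mem_singleton] at hu
    rcases hu with rfl | rfl | rfl | rfl <;> decide
  · obtain ⟨a, b⟩ := u
    intro hu
    replace hu : a * a + b * b = 1 := by simpa [norm_def] using hu
    have ha₁ : -1 ≤ a := by nlinarith
    have ha₂ : a ≤ 1 := by nlinarith
    have hb₁ : -1 ≤ b := by nlinarith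
    have hb₂ : b ≤ 1 := by nlinarith
    interval_cases a <;> interval_cases b <;> simp_all <;> decide

def twoAddI : ℤ[i] := ⟨2, 1⟩

theorem norm_twoAddI : twoAddI.norm = 5 := by decide

theorem norm_star_twoAddI : (star twoAddI).norm = 5 := by decide

theorem twoAddI_mul_star : twoAddI * star twoAddI = 5 := by decide

theorem prime_twoAddI : Prime twoAddI :=
  irreducible_iff_prime.1 <| irreducible_of_natAbs_norm_prime <| by rw [norm_twoAddI]; norm_num

theorem not_twoAddI_dvd_star : ¬ twoAddI ∣ star twoAddI := by
  intro h
  have h4 : twoAddI ∣ 4 := by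
    simpa [show twoAddI + star twoAddI = 4 by decide] using dvd_add dvd_rfl h
  exact absurd (map_dvd normMonoidHom h4) (by decide)

theorem twoAddI_dvd_or_star_dvd {z : ℤ[i]} (h : 5 ∣ z.norm) :
    twoAddI ∣ z ∨ star twoAddI ∣ z := by
  have h5 : twoAddI ∣ z * star z := by
    rw [← norm_eq_mul_conj]
    exact (Dvd.intro _ twoAddI_mul_star).trans (by exact_mod_cast Int.cast_dvd_cast _ _ h)
  refine (prime_twoAddI.dvd_or_dvd h5).imp_right fun h' => ?_
  simpa [starRingEnd_apply] using map_dvd (starRingEnd ℤ[i]) h'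

theorem norm_eq_five_pow_of_norm_mul {m : ℕ} {π w : ℤ[i]} (hπ : π.norm = 5)
    (h : (π * w).norm = 5 ^ (m + 1)) : w.norm = 5 ^ m := by
  rw [Zsqrtd.norm_mul, hπ, pow_succ'] at h
  exact mul_left_cancel₀ (by norm_num) h

theorem norm_eq_five_pow_iff {m : ℕ} {z : ℤ[i]} :
    z.norm = 5 ^ m ↔
      ∃ u, IsUnit u ∧ ∃ j ≤ m, z = u * twoAddI ^ j * star twoAddI ^ (m - j) := by
  constructor
  · induction m generalizing z with
    | zero =>
      exact fun hz => ⟨z, (norm_eq_one_iff' (by norm_num) z).1 (by simpa using hz), 0, le_rfl,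
        by simp⟩
    | succ m ih =>
      intro hz
      rcases twoAddI_dvd_or_star_dvd (hz ▸ dvd_pow_self 5 m.succ_ne_zero) with
        ⟨w, rfl⟩ | ⟨w, rfl⟩
      · obtain ⟨u, hu, j, hj, rfl⟩ := ih (norm_eq_five_pow_of_norm_mul norm_twoAddI hz)
        exact ⟨u, hu, j + 1, by omega, by rw [show m + 1 - (j + 1) = m - j by omega]; ring⟩
      · obtain ⟨u, hu, j, hj, rfl⟩ := ih (norm_eq_five_pow_of_norm_mul norm_star_twoAddI hz)
        exact ⟨u, hu, j, by omega, by rw [show m + 1 - j = m - j + 1 by omega]; ring⟩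
  · rintro ⟨u, hu, j, hj, rfl⟩
    have norm_pow (x : ℤ[i]) (k : ℕ) : (x ^ k).norm = x.norm ^ k := map_pow normMonoidHom x k
    rw [Zsqrtd.norm_mul, Zsqrtd.norm_mul, (norm_eq_one_iff' (by norm_num) u).2 hu, norm_pow,
      norm_pow, norm_twoAddI, norm_star_twoAddI, one_mul, ← pow_add, Nat.add_sub_cancel' hj]

theorem emultiplicity_twoAddI_unit_mul {u : ℤ[i]} (hu : IsUnit u) (j l : ℕ) :
    emultiplicity twoAddI (u * twoAddI ^ j * star twoAddI ^ l) = j := by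
  rw [emultiplicity_mul prime_twoAddI, emultiplicity_mul prime_twoAddI,
    emultiplicity_pow_self_of_prime prime_twoAddI, emultiplicity_pow prime_twoAddI,
    emultiplicity_eq_zero.2 not_twoAddI_dvd_star,
    emultiplicity_of_isUnit_right prime_twoAddI.not_isUnit hu]
  simp

theorem ncard_norm_eq_five_pow (m : ℕ) : {z : ℤ[i] | z.norm = 5 ^ m}.ncard = 4 * (m + 1) := by
  have hS : {z : ℤ[i] | z.norm = 5 ^ m} = ((unitFinset ×ˢ Finset.range (m + 1)).image
      fun p => p.1 * twoAddI ^ p.2 * star twoAddI ^ (m - p.2) : Finset ℤ[i]) := by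
    ext z
    simp only [mem_ofPred_eq, norm_eq_five_pow_iff, Finset.coe_image, mem_image, Finset.mem_coe,
      Finset.mem_product, mem_unitFinset, Finset.mem_range, Nat.lt_succ_iff, Prod.exists]
    exact ⟨fun ⟨u, hu, j, hj, hz⟩ => ⟨u, j, ⟨hu, hj⟩, hz.symm⟩,
      fun ⟨u, j, ⟨hu, hj⟩, hz⟩ => ⟨u, hu, j, hj, hz.symm⟩⟩
  rw [hS, ncard_coe_finset, Finset.card_image_of_injOn, Finset.card_product, card_unitFinset,
    Finset.card_range]
  rintro ⟨u, j⟩ h ⟨u', j'⟩ h' heq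
  simp only [Finset.coe_product, mem_prod, Finset.mem_coe, mem_unitFinset] at h h'
  obtain rfl : j = j' := by
    simpa [emultiplicity_twoAddI_unit_mul h.1, emultiplicity_twoAddI_unit_mul h'.1] using
      congrArg (emultiplicity twoAddI) heq
  simp only [Prod.mk.injEq, and_true]
  exact mul_right_cancel₀ (pow_ne_zero _ (by decide))
    (mul_right_cancel₀ (pow_ne_zero _ (by decide)) heq)

theorem two_mul_ncard_norm_eq_and_two_dvd_add_one {N : ℕ} (hN : Odd N) :
    2 * {z : ℤ[i] | z.norm = N ∧ 2 ∣ z + 1}.ncard = {z : ℤ[i] | z.norm = N}.ncard := by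
  have residues (z : ℤ[i]) (hz : z.norm = N) :
      (z.re : ZMod 2) ^ 2 + (z.im : ZMod 2) ^ 2 = 1 :=
    (intCast_re_sq_add_intCast_im_sq hz).trans (ZMod.natCast_eq_one_iff_odd.2 hN)
  have hset : {z : ℤ[i] | z.norm = N ∧ 2 ∣ z + 1} =
      {z : ℤ[i] | z.norm = N} ∩ {z | (z.im : ZMod 2) = 0} := by
    ext z
    refine and_congr_right fun hz => (natCast_dvd_add_one_iff (q := 2)).trans ?_
    have key : ∀ x y : ZMod 2, x ^ 2 + y ^ 2 = 1 → (x + 1 = 0 ∧ y = 0 ↔ y = 0) := by decide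
    exact key _ _ (residues z hz)
  rw [hset]
  refine two_mul_ncard_inter_of_swap (finite_setOf_norm_eq N) (mapsTo_sqrtd_mul N)
    injective_sqrtd_mul.injOn fun z hz => ?_
  have key : ∀ x y : ZMod 2, x ^ 2 + y ^ 2 = 1 → (x = 0 ↔ ¬ y = 0) := by decide
  simpa using key _ _ (residues z hz)

theorem four_mul_ncard_norm_eq_and_three_dvd_add_one {N : ℕ} (hN : N ≡ 1 [MOD 3]) :
    4 * {z : ℤ[i] | z.norm = N ∧ 3 ∣ z + 1}.ncard = {z : ℤ[i] | z.norm = N}.ncard := by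
  have residues (z : ℤ[i]) (hz : z.norm = N) :
      (z.re : ZMod 3) ^ 2 + (z.im : ZMod 3) ^ 2 = 1 :=
    (intCast_re_sq_add_intCast_im_sq hz).trans
      (by simpa using (ZMod.natCast_eq_natCast_iff N 1 3).2 hN)
  set S := {z : ℤ[i] | z.norm = N}
  have h₁ : 2 * (S ∩ {z | (z.im : ZMod 3) = 0}).ncard = S.ncard := by
    refine two_mul_ncard_inter_of_swap (finite_setOf_norm_eq N) (mapsTo_sqrtd_mul N)
      injective_sqrtd_mul.injOn fun z hz => ?_
    have key : ∀ x y : ZMod 3, x ^ 2 + y ^ 2 = 1 → (x = 0 ↔ ¬ y = 0) := by decide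
    simpa using key _ _ (residues z hz)
  have h₂ : 2 * (S ∩ {z | (z.im : ZMod 3) = 0} ∩ {z | (z.re : ZMod 3) + 1 = 0}).ncard =
      (S ∩ {z | (z.im : ZMod 3) = 0}).ncard := by
    refine two_mul_ncard_inter_of_swap ((finite_setOf_norm_eq N).inter_of_left _) (f := Neg.neg)
      (fun z hz => ?_) neg_injective.injOn fun z hz => ?_
    · simpa [S, Zsqrtd.norm_neg] using hz
    · have key : ∀ x y : ZMod 3, x ^ 2 + y ^ 2 = 1 → y = 0 →
          (-x + 1 = 0 ↔ ¬ x + 1 = 0) := by decide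
      simpa using key _ _ (residues z hz.1) hz.2
  have hset : {z : ℤ[i] | z.norm = N ∧ 3 ∣ z + 1} =
      S ∩ {z | (z.im : ZMod 3) = 0} ∩ {z | (z.re : ZMod 3) + 1 = 0} := by
    ext z
    have h3 : 3 ∣ z + 1 ↔ (z.re : ZMod 3) + 1 = 0 ∧ (z.im : ZMod 3) = 0 :=
      natCast_dvd_add_one_iff
    simp only [mem_inter_iff, mem_ofPred_eq, h3, S]
    tauto
  rw [hset]
  omega

theorem ncard_circle_eq_ncard_norm_eq_and_dvd (q N : ℕ) (hq : q ≠ 0) :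
    {p : ℤ × ℤ | ((p.1 : ℝ) - 1 / q) ^ 2 + (p.2 : ℝ) ^ 2 = (√N / q) ^ 2}.ncard =
      {z : ℤ[i] | z.norm = N ∧ (q : ℤ[i]) ∣ z + 1}.ncard := by
  have on_circle_iff (x y : ℤ) : ((x : ℝ) - 1 / q) ^ 2 + (y : ℝ) ^ 2 = (√N / q) ^ 2 ↔
      (q * x - 1) * (q * x - 1) + q * y * (q * y) = (N : ℤ) := by
    rw [div_pow, Real.sq_sqrt (Nat.cast_nonneg _), ← @Int.cast_inj ℝ]
    push_cast
    have : (q : ℝ) ≠ 0 := by exact_mod_cast hq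
    constructor <;> intro h
    · field_simp at h
      linear_combination h
    · field_simp
      linear_combination h
  let g : ℤ × ℤ → ℤ[i] := fun p => q * ⟨p.1, p.2⟩ - 1
  have hg : Function.Injective g := fun p p' h => by
    have := mul_left_cancel₀ (Nat.cast_ne_zero.2 hq) (sub_left_injective h)
    simp_all [Prod.ext_iff, Zsqrtd.ext_iff]
  rw [← ncard_image_of_injective _ hg]
  congr 1
  ext z
  constructor
  · rintro ⟨⟨x, y⟩, hp, rfl⟩
    refine ⟨?_, Dvd.intro _ (sub_add_cancel _ _).symm⟩
    simpa [g, norm_def] using (on_circle_iff x y).1 hp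
  · rintro ⟨hz, w, hw⟩
    have hzw : z = q * w - 1 := eq_sub_of_add_eq hw
    refine ⟨(w.re, w.im), (on_circle_iff _ _).2 ?_, hzw.symm⟩
    simpa [hzw, norm_def] using hz

end GaussianInt

open GaussianInt

/-- `ℤ² ⊂ ℝ²` is universally concyclic: for every positive integer `n` there is a
circle in the plane passing through exactly `n` points of `ℤ²`. -/
theorem stmt_3 (n : ℕ) (hn : 0 < n) :
    ∃ (c₁ c₂ r : ℝ), 0 < r ∧
      Set.ncard {p : ℤ × ℤ |
        ((p.1 : ℝ) - c₁) ^ 2 + ((p.2 : ℝ) - c₂) ^ 2 = r ^ 2} = n := by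
  rcases Nat.even_or_odd' n with ⟨k, rfl | rfl⟩
  · refine ⟨1 / 2, 0, √(5 ^ (k - 1)) / 2, by positivity, ?_⟩
    have half :=
      two_mul_ncard_norm_eq_and_two_dvd_add_one (N := 5 ^ (k - 1)) (by decide : Odd 5).pow
    have circle := ncard_circle_eq_ncard_norm_eq_and_dvd 2 (5 ^ (k - 1)) two_ne_zero
    push_cast at half circle
    rw [ncard_norm_eq_five_pow] at half
    simp only [sub_zero]
    omega
  · refine ⟨1 / 3, 0, √(5 ^ (2 * k)) / 3, by positivity, ?_⟩
    have quarter := four_mul_ncard_norm_eq_and_three_dvd_add_one (N := 5 ^ (2 * k))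
      (by rw [pow_mul]; simpa using (show 5 ^ 2 ≡ 1 [MOD 3] from rfl).pow k)
    have circle := ncard_circle_eq_ncard_norm_eq_and_dvd 3 (5 ^ (2 * k)) three_ne_zero
    push_cast at quarter circle
    rw [ncard_norm_eq_five_pow] at quarter
    simp only [sub_zero]
    omega
end

section
/- If τ is a transcendental real number, then the lattice Λ generated by (1, τ) and (0, 1) in ℝ² contains no four concyclic points; in particular Λ is not universally concyclic. -/
/-!
Write a lattice point as `(m, mτ + k)` with `P = (m, k) ∈ ℤ²`. Any four points `Pᵢ` satisfy the
affine relation `∑ λᵢ (1, Pᵢ) = 0` whose weights `λᵢ` are the signed areas of the triangles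
formed by the other three points. If the images of the `Pᵢ` lie on a circle, then `x² + y²` is an
affine function on them, so `∑ λᵢ (mᵢ² + (mᵢτ + kᵢ)²) = 0`. This is a quadratic equation in `τ`
with integer coefficients `∑ λᵢ mᵢ²`, `2 ∑ λᵢ mᵢkᵢ` and `∑ λᵢ (mᵢ² + kᵢ²)`, which therefore all
vanish. Then the weights annihilate every quadratic polynomial in `(m, k)`, in particular the
product of the line `P₁P₂` (resp. `P₁P₃`) with a line through `P₃` (resp. `P₂`). If `P₁, P₂, P₃`
were not collinear, then `λ₄ ≠ 0` and this would put `P₄` on both lines `P₁P₂` and `P₁P₃`, i.e.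
`P₄ = P₁`. So `P₁, P₂, P₃` are collinear; but three distinct points on a circle never are.
-/

section Cofactor

variable {R : Type*} [CommRing R]

def area (P Q S : R × R) : R := (Q.1 - P.1) * (S.2 - P.2) - (Q.2 - P.2) * (S.1 - P.1)

theorem area_swap (P Q S : R × R) : area P Q S = -area P S Q := by
  simp only [area]; ring

/-- The weights are the cofactors of the `4 × 3` matrix with rows `(1, Pᵢ)`, so the sum vanishes
for every affine `f`. -/
def cofactorSum (P₁ P₂ P₃ P₄ : R × R) (f : R × R → R) : R :=
  area P₂ P₃ P₄ * f P₁ - area P₁ P₃ P₄ * f P₂ + area P₁ P₂ P₄ * f P₃ - area P₁ P₂ P₃ * f P₄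

variable {P₁ P₂ P₃ P₄ : R × R}

theorem cofactorSum_swap (f : R × R → R) :
    cofactorSum P₁ P₃ P₂ P₄ f = -cofactorSum P₁ P₂ P₃ P₄ f := by
  simp only [cofactorSum, area]; ring

theorem map_cofactorSum {S : Type*} [CommRing S] (φ : R →+* S) (f : R × R → R)
    (g : S × S → S) (hfg : ∀ p, g (Prod.map φ φ p) = φ (f p)) :
    cofactorSum (Prod.map φ φ P₁) (Prod.map φ φ P₂) (Prod.map φ φ P₃) (Prod.map φ φ P₄) g =
      φ (cofactorSum P₁ P₂ P₃ P₄ f) := by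
  simp only [cofactorSum, area, hfg, map_add, map_sub, map_mul, Prod.map_fst, Prod.map_snd]

theorem cofactorSum_circle {τ c₁ c₂ r : R}
    (h₁ : (P₁.1 - c₁) ^ 2 + (P₁.1 * τ + P₁.2 - c₂) ^ 2 = r ^ 2)
    (h₂ : (P₂.1 - c₁) ^ 2 + (P₂.1 * τ + P₂.2 - c₂) ^ 2 = r ^ 2)
    (h₃ : (P₃.1 - c₁) ^ 2 + (P₃.1 * τ + P₃.2 - c₂) ^ 2 = r ^ 2)
    (h₄ : (P₄.1 - c₁) ^ 2 + (P₄.1 * τ + P₄.2 - c₂) ^ 2 = r ^ 2) :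
    cofactorSum P₁ P₂ P₃ P₄ (fun p => p.1 ^ 2) * τ ^ 2
      + 2 * cofactorSum P₁ P₂ P₃ P₄ (fun p => p.1 * p.2) * τ
      + (cofactorSum P₁ P₂ P₃ P₄ (fun p => p.1 ^ 2) + cofactorSum P₁ P₂ P₃ P₄ (fun p => p.2 ^ 2))
      = 0 := by
  linear_combination (norm := skip) area P₂ P₃ P₄ * h₁ - area P₁ P₃ P₄ * h₂
    + area P₁ P₂ P₄ * h₃ - area P₁ P₂ P₃ * h₄
  simp only [cofactorSum, area]
  ring

theorem cofactorSum_affine_mul_affine (hxx : cofactorSum P₁ P₂ P₃ P₄ (fun p => p.1 ^ 2) = 0)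
    (hxy : cofactorSum P₁ P₂ P₃ P₄ (fun p => p.1 * p.2) = 0)
    (hyy : cofactorSum P₁ P₂ P₃ P₄ (fun p => p.2 ^ 2) = 0) (a b c a' b' c' : R) :
    cofactorSum P₁ P₂ P₃ P₄ (fun p => (a * p.1 + b * p.2 + c) * (a' * p.1 + b' * p.2 + c'))
      = 0 := by
  simp only [cofactorSum, area] at *
  linear_combination a * a' * hxx + (a * b' + a' * b) * hxy + b * b' * hyy

variable [NoZeroDivisors R]

theorem eq_zero_of_mul_sub_eq_zero {t : R} {P Q : R × R} (hPQ : P ≠ Q)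
    (h₁ : t * (P.1 - Q.1) = 0) (h₂ : t * (P.2 - Q.2) = 0) : t = 0 := by
  by_contra ht
  exact hPQ (Prod.ext (sub_eq_zero.1 ((mul_eq_zero.1 h₁).resolve_left ht))
    (sub_eq_zero.1 ((mul_eq_zero.1 h₂).resolve_left ht)))

theorem area_mul_area_eq_zero (hxx : cofactorSum P₁ P₂ P₃ P₄ (fun p => p.1 ^ 2) = 0)
    (hxy : cofactorSum P₁ P₂ P₃ P₄ (fun p => p.1 * p.2) = 0)
    (hyy : cofactorSum P₁ P₂ P₃ P₄ (fun p => p.2 ^ 2) = 0) (h₄₃ : P₄ ≠ P₃) :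
    area P₁ P₂ P₃ * area P₁ P₂ P₄ = 0 := by
  -- `area P₁ P₂ ·` vanishes on the line `P₁P₂`; times a coordinate of `· - P₃` it vanishes at
  -- `P₁, P₂, P₃`, so the cofactor sum only sees `P₄`.
  have key := cofactorSum_affine_mul_affine hxx hxy hyy
    (P₁.2 - P₂.2) (P₂.1 - P₁.1) (P₁.1 * P₂.2 - P₁.2 * P₂.1)
  refine eq_zero_of_mul_sub_eq_zero h₄₃ ?_ ?_
  · have := key 1 0 (-P₃.1)
    simp only [cofactorSum, area] at this ⊢
    linear_combination -this
  · have := key 0 1 (-P₃.2)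
    simp only [cofactorSum, area] at this ⊢
    linear_combination -this

theorem area_eq_zero_of_cofactorSum_eq_zero
    (hxx : cofactorSum P₁ P₂ P₃ P₄ (fun p => p.1 ^ 2) = 0)
    (hxy : cofactorSum P₁ P₂ P₃ P₄ (fun p => p.1 * p.2) = 0)
    (hyy : cofactorSum P₁ P₂ P₃ P₄ (fun p => p.2 ^ 2) = 0)
    (h₄₁ : P₄ ≠ P₁) (h₄₂ : P₄ ≠ P₂) (h₄₃ : P₄ ≠ P₃) : area P₁ P₂ P₃ = 0 := by
  by_contra hA
  have h₁₂₄ := (mul_eq_zero.1 (area_mul_area_eq_zero hxx hxy hyy h₄₃)).resolve_left hA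
  have h₁₃₄ : area P₁ P₃ P₄ = 0 := by
    refine (mul_eq_zero.1 (area_mul_area_eq_zero ?_ ?_ ?_ h₄₂)).resolve_left ?_
    · rw [cofactorSum_swap, hxx, neg_zero]
    · rw [cofactorSum_swap, hxy, neg_zero]
    · rw [cofactorSum_swap, hyy, neg_zero]
    · rwa [area_swap, neg_eq_zero]
  refine hA (eq_zero_of_mul_sub_eq_zero h₄₁ ?_ ?_)
  · simp only [area] at *
    linear_combination (P₃.1 - P₁.1) * h₁₂₄ - (P₂.1 - P₁.1) * h₁₃₄
  · simp only [area] at *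
    linear_combination (P₃.2 - P₁.2) * h₁₂₄ - (P₂.2 - P₁.2) * h₁₃₄

end Cofactor

theorem Transcendental.eq_zero_of_quadratic {R A : Type*} [CommRing R] [Ring A] [Algebra R A]
    {x : A} (hx : Transcendental R x) {a b c : R}
    (h : algebraMap R A a * x ^ 2 + algebraMap R A b * x + algebraMap R A c = 0) :
    a = 0 ∧ b = 0 ∧ c = 0 := by
  open Polynomial in
  have hp := transcendental_iff.1 hx (C a * X ^ 2 + C b * X + C c) (by simpa using h)
  refine ⟨?_, ?_, ?_⟩
  · simpa using congrArg (Polynomial.coeff · 2) hp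
  · simpa using congrArg (Polynomial.coeff · 1) hp
  · simpa using congrArg (Polynomial.coeff · 0) hp

def OnCircle (c₁ c₂ r : ℝ) (p : ℝ × ℝ) : Prop := (p.1 - c₁) ^ 2 + (p.2 - c₂) ^ 2 = r ^ 2

theorem sub_sq_add_sub_sq_ne_zero {p q : ℝ × ℝ} (hpq : p ≠ q) :
    (q.1 - p.1) ^ 2 + (q.2 - p.2) ^ 2 ≠ 0 := by
  intro h
  refine hpq (Prod.ext ?_ ?_) <;> nlinarith [sq_nonneg (q.1 - p.1), sq_nonneg (q.2 - p.2)]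

theorem area_ne_zero_of_onCircle {c₁ c₂ r : ℝ} {p q s : ℝ × ℝ} (hp : OnCircle c₁ c₂ r p)
    (hq : OnCircle c₁ c₂ r q) (hs : OnCircle c₁ c₂ r s) (hpq : p ≠ q) (hps : p ≠ s)
    (hqs : q ≠ s) : area p q s ≠ 0 := by
  intro hA
  unfold OnCircle at hp hq hs
  unfold area at hA
  -- With `d = q - p`, `e = s - p`: collinearity gives `|d|² e = (d ⬝ e) d`, and then the circle
  -- equations force `|e|² = d ⬝ e = |d|²`, i.e. `|d - e|² = 0`.
  set dd := (q.1 - p.1) ^ 2 + (q.2 - p.2) ^ 2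
  set ee := (s.1 - p.1) ^ 2 + (s.2 - p.2) ^ 2
  set de := (q.1 - p.1) * (s.1 - p.1) + (q.2 - p.2) * (s.2 - p.2)
  have hee : dd * (ee - de) = 0 := by
    linear_combination dd * (hs - hp) - de * (hq - hp)
      - 2 * ((p.2 - c₂) * (q.1 - p.1) - (p.1 - c₁) * (q.2 - p.2)) * hA
  have hdd : ee * (dd - de) = 0 := by
    linear_combination ee * (hq - hp) - de * (hs - hp)
      + 2 * ((p.2 - c₂) * (s.1 - p.1) - (p.1 - c₁) * (s.2 - p.2)) * hA
  refine sub_sq_add_sub_sq_ne_zero hqs ?_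
  linear_combination (mul_eq_zero.1 hee).resolve_left (sub_sq_add_sub_sq_ne_zero hpq)
    + (mul_eq_zero.1 hdd).resolve_left (sub_sq_add_sub_sq_ne_zero hps)

def latticePoint (τ : ℝ) (P : ℤ × ℤ) : ℝ × ℝ := (P.1, P.1 * τ + P.2)

theorem area_latticePoint (τ : ℝ) (P Q S : ℤ × ℤ) :
    area (latticePoint τ P) (latticePoint τ Q) (latticePoint τ S) = area P Q S := by
  simp only [area, latticePoint]; push_cast; ring

theorem area_eq_zero_of_onCircle_latticePoint {τ c₁ c₂ r : ℝ} (hτ : Transcendental ℚ τ)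
    {P₁ P₂ P₃ P₄ : ℤ × ℤ} (h₁ : OnCircle c₁ c₂ r (latticePoint τ P₁))
    (h₂ : OnCircle c₁ c₂ r (latticePoint τ P₂)) (h₃ : OnCircle c₁ c₂ r (latticePoint τ P₃))
    (h₄ : OnCircle c₁ c₂ r (latticePoint τ P₄)) (h₄₁ : P₄ ≠ P₁) (h₄₂ : P₄ ≠ P₂)
    (h₄₃ : P₄ ≠ P₃) : area P₁ P₂ P₃ = 0 := by
  have hτℤ : Transcendental ℤ τ := fun h ↦ hτ (h.extendScalars (algebraMap ℤ ℚ).injective_int)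
  let ι := Int.castRingHom ℝ
  have hrel := cofactorSum_circle (P₁ := Prod.map ι ι P₁) (P₂ := Prod.map ι ι P₂)
    (P₃ := Prod.map ι ι P₃) (P₄ := Prod.map ι ι P₄) h₁ h₂ h₃ h₄
  rw [map_cofactorSum ι (fun p => p.1 ^ 2) _ (fun p => by simp [ι]),
    map_cofactorSum ι (fun p => p.1 * p.2) _ (fun p => by simp [ι]),
    map_cofactorSum ι (fun p => p.2 ^ 2) _ (fun p => by simp [ι])] at hrel
  obtain ⟨hxx, h2xy, hsum⟩ := hτℤ.eq_zero_of_quadratic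
    (a := cofactorSum P₁ P₂ P₃ P₄ (fun p => p.1 ^ 2))
    (b := 2 * cofactorSum P₁ P₂ P₃ P₄ (fun p => p.1 * p.2))
    (c := cofactorSum P₁ P₂ P₃ P₄ (fun p => p.1 ^ 2) + cofactorSum P₁ P₂ P₃ P₄ (fun p => p.2 ^ 2))
    (by simpa [ι] using hrel)
  exact area_eq_zero_of_cofactorSum_eq_zero hxx (by omega) (by omega) h₄₁ h₄₂ h₄₃

theorem not_four_concyclic {τ : ℝ} (hτ : Transcendental ℚ τ) {c₁ c₂ r : ℝ}
    {p₁ p₂ p₃ p₄ : ℝ × ℝ}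
    (hp : ∀ p ∈ [p₁, p₂, p₃, p₄],
      (∃ m k : ℤ, p = ((m : ℝ), (m : ℝ) * τ + (k : ℝ))) ∧ OnCircle c₁ c₂ r p)
    (h₁₂ : p₁ ≠ p₂) (h₁₃ : p₁ ≠ p₃) (h₁₄ : p₁ ≠ p₄) (h₂₃ : p₂ ≠ p₃) (h₂₄ : p₂ ≠ p₄)
    (h₃₄ : p₃ ≠ p₄) : False := by
  simp only [List.mem_cons, List.not_mem_nil, or_false, forall_eq_or_imp, forall_eq] at hp
  obtain ⟨⟨⟨m₁, k₁, rfl⟩, hc₁⟩, ⟨⟨m₂, k₂, rfl⟩, hc₂⟩, ⟨⟨m₃, k₃, rfl⟩, hc₃⟩,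
    ⟨⟨m₄, k₄, rfl⟩, hc₄⟩⟩ := hp
  refine area_ne_zero_of_onCircle hc₁ hc₂ hc₃ h₁₂ h₁₃ h₂₃ ?_
  have hℤ := area_eq_zero_of_onCircle_latticePoint hτ (P₁ := (m₁, k₁)) (P₂ := (m₂, k₂))
    (P₃ := (m₃, k₃)) (P₄ := (m₄, k₄)) hc₁ hc₂ hc₃ hc₄ (ne_of_apply_ne (latticePoint τ) h₁₄.symm)
    (ne_of_apply_ne (latticePoint τ) h₂₄.symm) (ne_of_apply_ne (latticePoint τ) h₃₄.symm)
  exact (area_latticePoint τ (m₁, k₁) (m₂, k₂) (m₃, k₃)).trans (by rw [hℤ, Int.cast_zero])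

/-- If `τ` is transcendental, then the lattice `Λ[(1,τ),(0,1)] = {(m, mτ + k)}`
contains no four concyclic points; in particular it is not universally concyclic. -/
theorem stmt_7 (τ : ℝ) (hτ : Transcendental ℚ τ) :
    (¬ ∃ (c₁ c₂ r : ℝ) (p₁ p₂ p₃ p₄ : ℝ × ℝ),
        (∀ p ∈ [p₁, p₂, p₃, p₄],
          (∃ m k : ℤ, p = ((m : ℝ), (m : ℝ) * τ + (k : ℝ))) ∧
          (p.1 - c₁) ^ 2 + (p.2 - c₂) ^ 2 = r ^ 2) ∧
        p₁ ≠ p₂ ∧ p₁ ≠ p₃ ∧ p₁ ≠ p₄ ∧ p₂ ≠ p₃ ∧ p₂ ≠ p₄ ∧ p₃ ≠ p₄) ∧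
    ¬ (∀ n : ℕ, 0 < n → ∃ (c₁ c₂ r : ℝ), 0 < r ∧
        Set.ncard {p : ℝ × ℝ |
          (∃ m k : ℤ, p = ((m : ℝ), (m : ℝ) * τ + (k : ℝ))) ∧
          (p.1 - c₁) ^ 2 + (p.2 - c₂) ^ 2 = r ^ 2} = n) := by
  refine ⟨fun ⟨_, _, _, _, _, _, _, hp, h₁₂, h₁₃, h₁₄, h₂₃, h₂₄, h₃₄⟩ ↦
    not_four_concyclic hτ hp h₁₂ h₁₃ h₁₄ h₂₃ h₂₄ h₃₄, fun h ↦ ?_⟩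
  obtain ⟨c₁, c₂, r, -, hcard⟩ := h 4 four_pos
  obtain ⟨p₁, p₂, p₃, p₄, h₁₂, h₁₃, h₁₄, h₂₃, h₂₄, h₃₄, hs⟩ := Set.ncard_eq_four.1 hcard
  refine not_four_concyclic hτ (c₁ := c₁) (c₂ := c₂) (r := r) (fun p hp ↦ ?_)
    h₁₂ h₁₃ h₁₄ h₂₃ h₂₄ h₃₄
  have hmem : p ∈ ({p₁, p₂, p₃, p₄} : Set (ℝ × ℝ)) := by simpa using hp
  rw [← hs] at hmem
  exact hmem
end

section
/- Let α, β > 0. The rectangular lattice generated by (α, 0) and (0, β) contains no five concyclic points if and only if (α/β)² is irrational. -/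
/-!
If `(α/β)² = a/b` is rational, then `bα² = aβ²`, and the five lattice points
`(±(2b+1)α, ±(2a-1)β)` and `((2b-1)α, (2a+1)β)` lie on one circle about the origin.

Conversely, a circle through lattice points `(mα, kβ)` is a relation
`m²α² + k²β² + mD + kE + F = 0` with real `D, E, F`. When `α²` and `β²` are linearly
independent over `ℚ`, applying `ℚ`-linear functionals `ℝ → ℚ` that send `(α², β²)` to `(1, 0)`
and to `(0, 1)` yields two rational parabolas `m² + am + bk + c = 0` and
`k² + a'k + b'm + c' = 0` through the same points, and two such parabolas meet in at most
four points.
-/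

open Polynomial Finset

theorem LinearIndependent.exists_dual_eq_one_eq_zero {K V : Type*} [Field K] [AddCommGroup V]
    [Module K V] {x y : V} (h : LinearIndependent K ![x, y]) :
    ∃ f : Module.Dual K V, f x = 1 ∧ f y = 0 := by
  have hx : x ∉ K ∙ y := by
    rw [Submodule.mem_span_singleton]
    rintro ⟨t, rfl⟩
    simpa using LinearIndependent.pair_iff.1 h 1 (-t) (by simp)
  obtain ⟨f, hfx, hf⟩ := Submodule.exists_dual_map_eq_bot_of_notMem hx inferInstance
  have hfy : f y = 0 := by
    simpa [hf] using Submodule.mem_map_of_mem (f := f) (Submodule.mem_span_singleton_self y)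
  exact ⟨(f x)⁻¹ • f, by simp [hfx], by simp [hfy]⟩

theorem linearIndependent_pair_of_irrational_div {x y : ℝ} (h : Irrational (x / y)) :
    LinearIndependent ℚ ![x, y] := by
  have hy : y ≠ 0 := by
    rintro rfl
    simp at h
  refine LinearIndependent.pair_iff.2 fun s t hst => ?_
  rw [Rat.smul_def, Rat.smul_def] at hst
  obtain rfl : s = 0 := by
    by_contra hs
    refine h ⟨-t / s, ?_⟩
    push_cast
    rw [div_eq_div_iff (by exact_mod_cast hs) hy]
    linear_combination -hst
  simpa [hy] using hst

section Parabolas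

variable {R : Type*} [CommRing R] [IsDomain R] {a b c a' b' c' : R} {s : Finset (R × R)}

theorem card_le_four_of_parabolas_of_ne_zero (hb : b ≠ 0)
    (h₁ : ∀ p ∈ s, p.1 ^ 2 + a * p.1 + b * p.2 + c = 0)
    (h₂ : ∀ p ∈ s, p.2 ^ 2 + a' * p.2 + b' * p.1 + c' = 0) : #s ≤ 4 := by
  classical
  set g : R[X] := X ^ 2 + C a * X + C c
  -- `b * y = -g(x)` on the first parabola; substituting into the second gives a quartic in `x`.
  set Q : R[X] := g ^ 2 - C (a' * b) * g + C (b ^ 2 * b') * X + C (b ^ 2 * c')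
  have hQ : Q.natDegree = 4 := by simp only [Q, g]; compute_degree!
  have hQ0 : Q ≠ 0 := fun h => by simp [h] at hQ
  have hinj : Set.InjOn Prod.fst (s : Set (R × R)) := fun p hp q hq hpq =>
    Prod.ext hpq <| mul_left_cancel₀ hb <| by
      linear_combination h₁ p hp - h₁ q hq - (p.1 + q.1 + a) * hpq
  calc #s = #(s.image Prod.fst) := (card_image_of_injOn hinj).symm
    _ ≤ Q.natDegree := by
      refine card_le_degree_of_subset_roots fun x hx => ?_
      obtain ⟨p, hp, rfl⟩ := mem_image.1 hx
      rw [mem_roots hQ0, IsRoot]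
      simp only [Q, g, eval_add, eval_sub, eval_mul, eval_pow, eval_C, eval_X]
      linear_combination (p.1 ^ 2 + a * p.1 + c - b * p.2 - a' * b) * h₁ p hp + b ^ 2 * h₂ p hp
    _ = 4 := hQ

theorem card_le_four_of_parabolas
    (h₁ : ∀ p ∈ s, p.1 ^ 2 + a * p.1 + b * p.2 + c = 0)
    (h₂ : ∀ p ∈ s, p.2 ^ 2 + a' * p.2 + b' * p.1 + c' = 0) : #s ≤ 4 := by
  classical
  rcases ne_or_eq b 0 with hb | rfl
  · exact card_le_four_of_parabolas_of_ne_zero hb h₁ h₂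
  rcases ne_or_eq b' 0 with hb' | rfl
  · rw [← card_map (Equiv.prodComm R R).toEmbedding]
    exact card_le_four_of_parabolas_of_ne_zero hb'
      (fun p hp => h₂ p.swap (by simpa using hp)) (fun p hp => h₁ p.swap (by simpa using hp))
  let P : R → R → R[X] := fun a c => X ^ 2 + C a * X + C c
  have hP : ∀ a c, (P a c).natDegree = 2 := fun a c => by simp only [P]; compute_degree!
  have hmem : ∀ {a c x : R}, x ^ 2 + a * x + c = 0 → x ∈ (P a c).roots.toFinset := by
    intro a c x hx
    rw [Multiset.mem_toFinset, mem_roots', IsRoot.def]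
    refine ⟨fun h => by simpa [h] using hP a c, ?_⟩
    simp only [P, eval_add, eval_mul, eval_pow, eval_C, eval_X]
    linear_combination hx
  have hcard : ∀ a c, #(P a c).roots.toFinset ≤ 2 := fun a c =>
    (Multiset.toFinset_card_le _).trans <| (card_roots' _).trans (hP a c).le
  calc #s ≤ #((P a c).roots.toFinset ×ˢ (P a' c').roots.toFinset) :=
        card_le_card fun p hp => mem_product.2
          ⟨hmem (by linear_combination h₁ p hp), hmem (by linear_combination h₂ p hp)⟩
    _ ≤ 2 * 2 := card_product _ _ ▸ Nat.mul_le_mul (hcard a c) (hcard a' c')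

end Parabolas

theorem card_le_four_of_forall_zsmul_eq_zero {V : Type*} [AddCommGroup V] [Module ℚ V]
    {x y D E F : V} (hxy : LinearIndependent ℚ ![x, y]) {s : Finset (ℤ × ℤ)}
    (hs : ∀ p ∈ s, (p.1 ^ 2) • x + (p.2 ^ 2) • y + p.1 • D + p.2 • E + F = 0) : #s ≤ 4 := by
  obtain ⟨f, hfx, hfy⟩ := hxy.exists_dual_eq_one_eq_zero
  obtain ⟨g, hgy, hgx⟩ := (LinearIndependent.pair_symm_iff.1 hxy).exists_dual_eq_one_eq_zero
  have hφ : ∀ φ : Module.Dual ℚ V, ∀ p ∈ s,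
      (p.1 : ℚ) ^ 2 * φ x + (p.2 : ℚ) ^ 2 * φ y + p.1 * φ D + p.2 * φ E + φ F = 0 := by
    intro φ p hp
    simpa [zsmul_eq_mul] using congrArg φ (hs p hp)
  let ι : ℤ × ℤ → ℚ × ℚ := Prod.map (↑) (↑)
  have hι : Function.Injective ι :=
    Prod.map_injective.2 ⟨Int.cast_injective, Int.cast_injective⟩
  have h₁ : ∀ q ∈ s.image ι, q.1 ^ 2 + f D * q.1 + f E * q.2 + f F = 0 := by
    refine forall_mem_image.2 fun p hp => ?_
    simp only [ι, Prod.map_fst, Prod.map_snd]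
    have h := hφ f p hp
    rw [hfx, hfy] at h
    linear_combination h
  have h₂ : ∀ q ∈ s.image ι, q.2 ^ 2 + g E * q.2 + g D * q.1 + g F = 0 := by
    refine forall_mem_image.2 fun p hp => ?_
    simp only [ι, Prod.map_fst, Prod.map_snd]
    have h := hφ g p hp
    rw [hgx, hgy] at h
    linear_combination h
  exact card_image_of_injective s hι ▸ card_le_four_of_parabolas h₁ h₂

def HasFiveConcyclicLatticePoints (α β : ℝ) : Prop :=
  ∃ (c₁ c₂ r : ℝ) (p : Fin 5 → ℝ × ℝ), Function.Injective p ∧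
    ∀ i, (∃ m k : ℤ, p i = ((m : ℝ) * α, (k : ℝ) * β)) ∧
      ((p i).1 - c₁) ^ 2 + ((p i).2 - c₂) ^ 2 = r ^ 2

theorem hasFiveConcyclicLatticePoints_of_mul_sq_eq {α β : ℝ} (hα : α ≠ 0) (hβ : β ≠ 0)
    {a b : ℤ} (hb : b ≠ 0) (hab : b * α ^ 2 = a * β ^ 2) :
    HasFiveConcyclicLatticePoints α β := by
  let z : Fin 5 → ℤ × ℤ :=
    ![(2 * b + 1, 2 * a - 1), (2 * b + 1, 1 - 2 * a), (-(2 * b + 1), 2 * a - 1),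
      (-(2 * b + 1), 1 - 2 * a), (2 * b - 1, 2 * a + 1)]
  have hz : Function.Injective z := by
    intro i j hij
    fin_cases i <;> fin_cases j <;> simp [z] at hij ⊢ <;> omega
  let L : ℤ × ℤ → ℝ × ℝ := fun q => (q.1 * α, q.2 * β)
  have hL : Function.Injective L := fun q q' h => by
    simp only [L, Prod.mk.injEq, mul_left_inj' hα, mul_left_inj' hβ, Int.cast_inj] at h
    exact Prod.ext h.1 h.2
  set ρ := ((2 * b + 1 : ℝ) * α) ^ 2 + ((2 * a - 1 : ℝ) * β) ^ 2
  have hρ : ∀ i, (L (z i)).1 ^ 2 + (L (z i)).2 ^ 2 = ρ := by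
    intro i
    fin_cases i
    all_goals simp [L, z, ρ]
    · ring
    · ring
    · ring
    · linear_combination -8 * hab
  refine ⟨0, 0, √ρ, L ∘ z, hL.comp hz, fun i => ⟨⟨_, _, rfl⟩, ?_⟩⟩
  rw [Real.sq_sqrt (by positivity), ← hρ i]
  simp

theorem hasFiveConcyclicLatticePoints_of_not_irrational {α β : ℝ} (hα : α ≠ 0) (hβ : β ≠ 0)
    (h : ¬Irrational ((α / β) ^ 2)) : HasFiveConcyclicLatticePoints α β := by
  obtain ⟨q, hq⟩ := not_not.1 h
  refine hasFiveConcyclicLatticePoints_of_mul_sq_eq hα hβ (a := q.num) (b := q.den)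
    (by exact_mod_cast q.den_ne_zero) ?_
  rw [Rat.cast_def, div_pow, div_eq_div_iff (by positivity) (by positivity)] at hq
  push_cast
  linear_combination -hq

theorem not_hasFiveConcyclicLatticePoints_of_irrational {α β : ℝ}
    (h : Irrational ((α / β) ^ 2)) : ¬HasFiveConcyclicLatticePoints α β := by
  rintro ⟨c₁, c₂, r, p, hp, hpc⟩
  choose m k hmk using fun i => (hpc i).1
  have hmk_inj : Function.Injective fun i => (m i, k i) := fun i j hij => hp <| by
    simp only [Prod.mk.injEq] at hij
    rw [hmk, hmk, hij.1, hij.2]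
  have hs : ∀ q ∈ univ.image fun i => (m i, k i), (q.1 ^ 2) • α ^ 2 + (q.2 ^ 2) • β ^ 2 +
      q.1 • (-2 * c₁ * α) + q.2 • (-2 * c₂ * β) + (c₁ ^ 2 + c₂ ^ 2 - r ^ 2) = 0 := by
    refine forall_mem_image.2 fun i _ => ?_
    have hcircle := (hpc i).2
    rw [hmk i] at hcircle
    simp only [zsmul_eq_mul]
    push_cast
    linear_combination hcircle
  have hcard := card_le_four_of_forall_zsmul_eq_zero
    (linearIndependent_pair_of_irrational_div (by rwa [← div_pow])) hs
  simp [card_image_of_injective _ hmk_inj] at hcard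

/-- For `α, β > 0`, the rectangular lattice `{(mα, kβ) : m, k ∈ ℤ}` contains no five
concyclic points if and only if `(α/β)²` is irrational. -/
theorem stmt_8 (α β : ℝ) (hα : 0 < α) (hβ : 0 < β) :
    (¬ ∃ (c₁ c₂ r : ℝ) (p : Fin 5 → ℝ × ℝ), Function.Injective p ∧
        ∀ i, (∃ m k : ℤ, p i = ((m : ℝ) * α, (k : ℝ) * β)) ∧
          ((p i).1 - c₁) ^ 2 + ((p i).2 - c₂) ^ 2 = r ^ 2) ↔
      Irrational ((α / β) ^ 2) :=
  ⟨fun h => by_contra fun hirr =>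
      h (hasFiveConcyclicLatticePoints_of_not_irrational hα.ne' hβ.ne' hirr),
    not_hasFiveConcyclicLatticePoints_of_irrational⟩
end

section
/- Let O_f be an order of conductor f in an imaginary quadratic field K. A nonzero O_f-ideal 𝔞 satisfies 𝔞 + fO_f = O_f if and only if its norm N(𝔞) = [O_f : 𝔞] is relatively prime to f; moreover every O_f-ideal prime to f is a proper O_f-ideal. -/
/-!
Since `O_f` is a free `ℤ`-module of finite rank, `O_f / 𝔞` is a finite ring, and
`𝔞 + f O_f = O_f` says that `f` is a unit in it, which in a finite ring means that `f` is
coprime to its order. If `β 𝔞 ⊆ 𝔞`, then `β` is integral (it stabilises the nonzero finitely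
generated `ℤ`-module `𝔞`), so `β ∈ O_K`; writing `1 = α + f γ` with `α ∈ 𝔞` gives
`β = β α + f (β γ) ∈ 𝔞 + f O_K ⊆ O_f`.
-/

open NumberField

theorem Ideal.sup_span_singleton_eq_top_iff_isUnit_mk {R : Type*} [CommRing R] (I : Ideal R)
    (r : R) : I ⊔ span {r} = ⊤ ↔ IsUnit (Quotient.mk I r) := by
  rw [← span_singleton_eq_top, ← Set.image_singleton, ← map_span,
    ← (comap_injective_of_surjective _ Quotient.mk_surjective).eq_iff, comap_top,
    comap_map_of_surjective _ Quotient.mk_surjective, ← RingHom.ker_eq_comap_bot, mk_ker, sup_comm]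

theorem isUnit_natCast_iff_coprime_card {R : Type*} [CommRing R] [Finite R] (n : ℕ) :
    IsUnit (n : R) ↔ (Nat.card R).Coprime n := by
  refine ⟨fun hn => Nat.coprime_of_dvd fun p hp hpR hpn => ?_, fun h => ?_⟩
  · have : Fact p.Prime := ⟨hp⟩
    obtain ⟨x, hx⟩ := exists_prime_addOrderOf_dvd_card' (G := R) p hpR
    have hnx : (n : R) * x = 0 := by
      rw [← nsmul_eq_mul, ← addOrderOf_dvd_iff_nsmul_eq_zero, hx]
      exact hpn
    rw [hn.mul_right_eq_zero.mp hnx, addOrderOf_zero] at hx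
    exact hp.one_lt.ne hx
  · obtain ⟨x, hx⟩ := (Nat.Coprime.nsmul_right_bijective (G := R) h).2 1
    exact IsUnit.of_mul_eq_one x (by simpa only [nsmul_eq_mul] using hx)

theorem Subring.moduleFinite_int {R : Type*} [Ring R] [Module.Finite ℤ R] (S : Subring R) :
    Module.Finite ℤ S :=
  .of_injective S.subtype.toAddMonoidHom.toIntLinearMap Subtype.val_injective

theorem Subring.finite_quotient_of_ne_bot {R : Type*} [CommRing R] [IsDomain R] [CharZero R]
    [Module.Finite ℤ R] (S : Subring R) {I : Ideal S} (hI : I ≠ ⊥) : Finite (S ⧸ I) := by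
  have := S.moduleFinite_int
  have : Module.Free ℤ S := Module.free_of_finite_type_torsion_free'
  exact I.finiteQuotientOfFreeOfNeBot hI

theorem Subring.mem_of_forall_mul_mem_of_sup_span_eq_top {R : Type*} [CommRing R] (S : Subring R)
    {f : S} (hf : ∀ y : R, (f : R) * y ∈ S) {I : Ideal S} (hI : I ⊔ Ideal.span {f} = ⊤) {b : R}
    (hb : ∀ x ∈ I, b * x ∈ S) : b ∈ S := by
  obtain ⟨x, hx, _, hy, hxy⟩ := Submodule.mem_sup.mp ((Ideal.eq_top_iff_one _).mp hI)
  obtain ⟨c, rfl⟩ := Ideal.mem_span_singleton'.mp hy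
  have hb_split : b = b * x + f * (b * c) := by
    have hxy' := congrArg (b * ((↑) : S → R) ·) hxy
    push_cast at hxy'
    linear_combination -hxy'
  rw [hb_split]
  exact S.add_mem (hb x hx) (hf _)

theorem NumberField.isIntegral_of_forall_mul_mem_ideal {K : Type*} [Field K] [NumberField K]
    (S : Subring (𝓞 K)) {I : Ideal S} (hI : I ≠ ⊥) {β : K}
    (hβ : ∀ x ∈ I, ∃ y ∈ I, β * ((x : 𝓞 K) : K) = ((y : 𝓞 K) : K)) : IsIntegral ℤ β := by
  have := S.moduleFinite_int
  let ι : S →ₗ[ℤ] K := ((algebraMap (𝓞 K) K).comp S.subtype).toAddMonoidHom.toIntLinearMap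
  have hι : Function.Injective ι :=
    (FaithfulSMul.algebraMap_injective (𝓞 K) K).comp Subtype.val_injective
  refine isIntegral_of_smul_mem_submodule ((I.restrictScalars ℤ).map ι) ?_
    ((IsNoetherian.noetherian _).map _) β ?_
  · rw [Ne, ← Submodule.map_bot ι, (Submodule.map_injective_of_injective hι).eq_iff,
      Submodule.restrictScalars_eq_bot_iff]
    exact hI
  · rintro _ ⟨x, hx, rfl⟩
    obtain ⟨y, hy, hxy⟩ := hβ x hx
    exact ⟨y, hy, hxy.symm⟩

theorem stmt_12_general (K : Type*) [Field K] [NumberField K]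
    (f : ℕ) (Of : Subring (𝓞 K))
    (hOf : ∀ x : 𝓞 K, x ∈ Of ↔ ∃ (m : ℤ) (y : 𝓞 K), x = m + f * y)
    (a : Ideal Of) (ha : a ≠ ⊥) :
    ((a ⊔ Ideal.span {(f : Of)} = ⊤) ↔ (Nat.card (Of ⧸ a)).Coprime f) ∧
    (a ⊔ Ideal.span {(f : Of)} = ⊤ →
      ∀ β : K,
        (∀ x : Of, x ∈ a → ∃ y : Of, y ∈ a ∧ β * ((x : 𝓞 K) : K) = ((y : 𝓞 K) : K)) ↔
        ∃ z : 𝓞 K, z ∈ Of ∧ (z : K) = β) := by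
  have := Of.finite_quotient_of_ne_bot ha
  refine ⟨?_, fun htop β => ⟨fun hβ => ?_, ?_⟩⟩
  · rw [Ideal.sup_span_singleton_eq_top_iff_isUnit_mk, map_natCast, isUnit_natCast_iff_coprime_card]
  · obtain ⟨z, rfl⟩ := (IsIntegralClosure.isIntegral_iff (A := 𝓞 K)).mp
      (isIntegral_of_forall_mul_mem_ideal Of ha hβ)
    have hfOf : ∀ y : 𝓞 K, ((f : Of) : 𝓞 K) * y ∈ Of := fun y => (hOf _).2 ⟨0, y, by simp⟩
    refine ⟨z, Of.mem_of_forall_mul_mem_of_sup_span_eq_top hfOf htop fun x hx => ?_, rfl⟩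
    obtain ⟨y, hy, hxy⟩ := hβ x hx
    have hzx : z * x = y := by exact_mod_cast hxy
    exact hzx ▸ y.2
  · rintro ⟨z, hz, rfl⟩ x hx
    exact ⟨⟨z, hz⟩ * x, a.mul_mem_left _ hx, by push_cast; rfl⟩

/-- Let `O_f = ℤ + f·O_K` be the order of conductor `f` in an imaginary quadratic
field `K`, and `𝔞` a nonzero `O_f`-ideal.  Then `𝔞 + f·O_f = O_f` iff the norm
`N(𝔞) = [O_f : 𝔞]` is coprime to `f`; moreover every `O_f`-ideal prime to `f`
is a proper `O_f`-ideal, i.e. `{β ∈ K : β𝔞 ⊆ 𝔞} = O_f`. -/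
theorem stmt_12 (K : Type*) [Field K] [NumberField K]
    (h2 : Module.finrank ℚ K = 2) (him : IsEmpty (K →+* ℝ))
    (f : ℕ) (hf : 0 < f) (Of : Subring (𝓞 K))
    (hOf : ∀ x : 𝓞 K, x ∈ Of ↔ ∃ (m : ℤ) (y : 𝓞 K), x = m + f * y)
    (a : Ideal Of) (ha : a ≠ ⊥) :
    ((a ⊔ Ideal.span {(f : Of)} = ⊤) ↔ (Nat.card (Of ⧸ a)).Coprime f) ∧
    (a ⊔ Ideal.span {(f : Of)} = ⊤ →
      ∀ β : K,
        (∀ x : Of, x ∈ a → ∃ y : Of, y ∈ a ∧ β * ((x : 𝓞 K) : K) = ((y : 𝓞 K) : K)) ↔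
        ∃ z : 𝓞 K, z ∈ Of ∧ (z : K) = β) :=
  stmt_12_general K f Of hOf a ha
end

section
/- Let O_f be the order of conductor f in an imaginary quadratic field K with ring of integers O_K. If 𝔞 is an O_K-ideal with 𝔞 + fO_K = O_K, then 𝔞 ∩ O_f is an O_f-ideal prime to f, and N(𝔞 ∩ O_f) = N(𝔞). -/
/-!
The composite `O_f → O_K → O_K/𝔞` is surjective: writing `1 = x + f z` with `x ∈ 𝔞`, every
`t ∈ O_K` is congruent modulo `𝔞` to `f z t ∈ f O_K ⊆ O_f`. Its kernel is `𝔞 ∩ O_f`, so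
`O_f/(𝔞 ∩ O_f) ≅ O_K/𝔞`, which gives the norms. In `O_K/𝔞` the image of `f` generates the unit
ideal, and pulling back along this surjection shows that `𝔞 ∩ O_f` and `f O_f` are coprime.
-/

open NumberField

namespace Subring

variable {R : Type*} [CommRing R] (S : Subring R) {f : S} {a : Ideal R}

theorem ker_quotientMk_comp_subtype :
    RingHom.ker ((Ideal.Quotient.mk a).comp S.subtype) = a.comap S.subtype := by
  rw [← RingHom.comap_ker, Ideal.mk_ker]

theorem surjective_quotientMk_comp_subtype (hfS : ∀ y : R, (f : R) * y ∈ S)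
    (ha : a ⊔ Ideal.span {(f : R)} = ⊤) :
    Function.Surjective ((Ideal.Quotient.mk a).comp S.subtype) := by
  intro t
  obtain ⟨t, rfl⟩ := Ideal.Quotient.mk_surjective t
  obtain ⟨x, hx, _, hz, hxz⟩ := Submodule.mem_sup.mp (ha ▸ Submodule.mem_top : (1 : R) ∈ _)
  obtain ⟨z, rfl⟩ := Ideal.mem_span_singleton'.mp hz
  refine ⟨⟨f * (z * t), hfS _⟩, Ideal.Quotient.eq.mpr ?_⟩
  have hdiff : (f : R) * (z * t) - t = -(t * x) := by linear_combination t * hxz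
  change (f : R) * (z * t) - t ∈ a
  rw [hdiff]
  exact a.neg_mem (a.mul_mem_left t hx)

theorem card_quotient_comap_subtype (hfS : ∀ y : R, (f : R) * y ∈ S)
    (ha : a ⊔ Ideal.span {(f : R)} = ⊤) :
    Nat.card (S ⧸ a.comap S.subtype) = Nat.card (R ⧸ a) := by
  rw [← ker_quotientMk_comp_subtype]
  exact Nat.card_congr
    (RingHom.quotientKerEquivOfSurjective (surjective_quotientMk_comp_subtype S hfS ha)).toEquiv

theorem comap_subtype_sup_span_eq_top (hfS : ∀ y : R, (f : R) * y ∈ S)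
    (ha : a ⊔ Ideal.span {(f : R)} = ⊤) :
    a.comap S.subtype ⊔ Ideal.span {f} = ⊤ := by
  have hmap : (Ideal.span {f}).map ((Ideal.Quotient.mk a).comp S.subtype) = ⊤ := by
    rw [← Ideal.map_map, Ideal.map_span, Set.image_singleton, ← Ideal.map_top (Ideal.Quotient.mk a),
      ← ha, Ideal.map_sup, Ideal.map_quotient_self, bot_sup_eq]
    rfl
  rw [← ker_quotientMk_comp_subtype, sup_comm, ← Ideal.comap_map_of_surjective' _
    (surjective_quotientMk_comp_subtype S hfS ha), hmap, Ideal.comap_top]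

end Subring

theorem stmt_13_general (K : Type*) [Field K]
    (f : ℕ) (Of : Subring (𝓞 K))
    (hOf : ∀ x : 𝓞 K, x ∈ Of ↔ ∃ (m : ℤ) (y : 𝓞 K), x = m + f * y)
    (a : Ideal (𝓞 K)) (ha : a ⊔ Ideal.span {(f : 𝓞 K)} = ⊤) :
    Ideal.comap Of.subtype a ⊔ Ideal.span {(f : Of)} = ⊤ ∧
    Nat.card (Of ⧸ Ideal.comap Of.subtype a) = Nat.card (𝓞 K ⧸ a) := by
  have hfOf : ∀ y : 𝓞 K, ((f : Of) : 𝓞 K) * y ∈ Of := fun y =>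
    (hOf _).mpr ⟨0, y, by push_cast; ring⟩
  have ha' : a ⊔ Ideal.span {((f : Of) : 𝓞 K)} = ⊤ := by push_cast; exact ha
  exact ⟨Of.comap_subtype_sup_span_eq_top hfOf ha', Of.card_quotient_comap_subtype hfOf ha'⟩

/-- Let `O_f = ℤ + f·O_K` be the order of conductor `f` in an imaginary quadratic
field `K`.  If `𝔞` is an `O_K`-ideal with `𝔞 + f·O_K = O_K`, then `𝔞 ∩ O_f` is an
`O_f`-ideal prime to `f`, of the same norm. -/
theorem stmt_13 (K : Type*) [Field K] [NumberField K]
    (h2 : Module.finrank ℚ K = 2) (him : IsEmpty (K →+* ℝ))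
    (f : ℕ) (hf : 0 < f) (Of : Subring (𝓞 K))
    (hOf : ∀ x : 𝓞 K, x ∈ Of ↔ ∃ (m : ℤ) (y : 𝓞 K), x = m + f * y)
    (a : Ideal (𝓞 K)) (ha : a ⊔ Ideal.span {(f : 𝓞 K)} = ⊤) :
    Ideal.comap Of.subtype a ⊔ Ideal.span {(f : Of)} = ⊤ ∧
    Nat.card (Of ⧸ Ideal.comap Of.subtype a) = Nat.card (𝓞 K ⧸ a) :=
  stmt_13_general K f Of hOf a ha
end

section
/- In the order O_f of conductor f in an imaginary quadratic field, every nonzero O_f-ideal prime to f factors uniquely (up to order) into a product of prime O_f-ideals, each of which is also prime to f. -/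
/-!
Invert `f`. Since `f • 𝓞 K ⊆ O_f`, the localization `O_f[1/f]` is `𝓞 K[1/f]`, a Dedekind domain.
Extension and contraction are inverse to each other on ideals of `O_f` prime to `f`: such an ideal
is saturated with respect to `f`, and a nonzero prime of `𝓞 K[1/f]` contracts to a nonzero, hence
maximal, prime of the one-dimensional ring `O_f` not containing `f`. Unique factorization of
ideals in `𝓞 K[1/f]` thus transfers to `O_f`.
-/

open NumberField UniqueFactorizationMonoid

theorem Ideal.mem_of_pow_mul_mem_of_sup_span_singleton_eq_top {R : Type*} [CommRing R]
    {I : Ideal R} {f x : R} (hI : I ⊔ Ideal.span {f} = ⊤) {n : ℕ} (h : f ^ n * x ∈ I) :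
    x ∈ I := by
  have hIn : Ideal.span {f ^ n} ⊔ I = ⊤ := by
    rw [sup_comm, ← Ideal.span_singleton_pow]
    exact Ideal.sup_pow_eq_top hI
  obtain ⟨c, b, hb, hcb⟩ :=
    Ideal.mem_span_singleton_sup.mp (hIn ▸ Submodule.mem_top : (1 : R) ∈ _)
  have hx : x = c * (f ^ n * x) + x * b := by linear_combination (-x) * hcb
  rw [hx]
  exact add_mem (I.mul_mem_left c h) (I.mul_mem_left x hb)

theorem Ideal.IsMaximal.sup_span_singleton_eq_top {R : Type*} [CommRing R] {P : Ideal R}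
    (hP : P.IsMaximal) {f : R} (hf : f ∉ P) : P ⊔ Ideal.span {f} = ⊤ := by
  by_contra h
  exact hf <| (hP.eq_of_le h le_sup_left).symm ▸
    Ideal.mem_sup_right (Ideal.mem_span_singleton_self f)

theorem Ideal.map_multiset_prod {R S : Type*} [CommSemiring R] [CommSemiring S] (φ : R →+* S)
    (s : Multiset (Ideal R)) : s.prod.map φ = (s.map (Ideal.map φ)).prod :=
  _root_.map_multiset_prod (Ideal.mapHom φ) s

theorem IsLocalization.Away.of_subring_of_mul_mem {A S : Type*} [CommRing A] [CommRing S]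
    [Algebra A S] (R : Subring A) [Algebra R S] [IsScalarTower R A S] (f : R)
    (hf : ∀ y : A, (f : A) * y ∈ R) [IsLocalization.Away (f : A) S] :
    IsLocalization.Away f S := by
  have hmap (x : R) : algebraMap R S x = algebraMap A S x := IsScalarTower.algebraMap_apply R A S x
  refine .mk f (by simpa [hmap] using algebraMap_isUnit (S := S) (f : A)) (fun z ↦ ?_)
    fun a b h ↦ ?_
  · obtain ⟨n, a, ha⟩ := surj (f : A) z
    refine ⟨n + 1, ⟨_, hf a⟩, ?_⟩
    rw [hmap, hmap, ← map_pow, pow_succ, map_mul, ← mul_assoc, map_pow, ha, ← map_mul, mul_comm]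
  · obtain ⟨n, hn⟩ := exists_of_eq (S := S) (x := (f : A)) (by simpa [hmap] using h)
    exact ⟨n, Subtype.ext (by simpa using hn)⟩

namespace IsLocalization.Away

variable {R : Type*} (S : Type*) [CommRing R] [CommRing S] [Algebra R S]

theorem algebraMap_injective (f : R) [IsLocalization.Away f S] [IsDomain R] [Nontrivial S] :
    Function.Injective (algebraMap R S) := by
  refine IsLocalization.injective S (M := Submonoid.powers f)
    (powers_le_nonZeroDivisors_of_noZeroDivisors ?_)
  rintro rfl
  simpa using algebraMap_isUnit (S := S) (0 : R)

variable {f : R} [IsLocalization.Away f S]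

theorem under_map_of_sup_span_singleton_eq_top {I : Ideal R} (hI : I ⊔ Ideal.span {f} = ⊤) :
    (I.map (algebraMap R S)).under R = I := by
  refine le_antisymm (fun x hx ↦ ?_) Ideal.le_comap_map
  obtain ⟨_, ⟨n, rfl⟩, h⟩ :=
    (algebraMap_mem_map_algebraMap_iff (Submonoid.powers f) S I x).mp hx
  exact Ideal.mem_of_pow_mul_mem_of_sup_span_singleton_eq_top hI h

theorem isPrime_map_of_sup_span_singleton_eq_top {P : Ideal R} [hP : P.IsPrime]
    (hPf : P ⊔ Ideal.span {f} = ⊤) : (P.map (algebraMap R S)).IsPrime := by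
  refine isPrime_of_isPrime_disjoint (Submonoid.powers f) S P hP
    ((Ideal.disjoint_powers_iff_notMem_of_isPrime f).mpr fun hf ↦ hP.ne_top ?_)
  rwa [sup_eq_left.mpr (Ideal.span_singleton_le_iff_mem P |>.mpr hf)] at hPf

theorem under_sup_span_singleton_eq_top [Ring.DimensionLEOne R] (Q : Ideal S) [hQ : Q.IsPrime]
    (hQ0 : Q ≠ ⊥) : Q.under R ⊔ Ideal.span {f} = ⊤ := by
  have hP0 : Q.under R ≠ ⊥ := fun h ↦
    hQ0 (by rw [← map_under (Submonoid.powers f) S Q, h, Ideal.map_bot])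
  refine (Ideal.IsPrime.under R Q).isMaximal hP0 |>.sup_span_singleton_eq_top fun hf ↦ ?_
  exact hQ.ne_top (Q.eq_top_of_isUnit_mem hf (algebraMap_isUnit f))

variable [IsDomain R] [IsDedekindDomain S]

theorem normalizedFactors_map_prod {s : Multiset (Ideal R)}
    (hs : ∀ P ∈ s, P.IsPrime ∧ P ⊔ Ideal.span {f} = ⊤) (hs0 : s.prod ≠ ⊥) :
    normalizedFactors (s.prod.map (algebraMap R S)) = s.map (Ideal.map (algebraMap R S)) := by
  rw [Ideal.map_multiset_prod]
  refine normalizedFactors_prod_of_prime fun Q hQ ↦ ?_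
  obtain ⟨P, hP, rfl⟩ := Multiset.mem_map.mp hQ
  obtain ⟨hPp, hPf⟩ := hs P hP
  refine Ideal.prime_of_isPrime ?_ (isPrime_map_of_sup_span_singleton_eq_top S hPf)
  rw [Ne, Ideal.map_eq_bot_iff_of_injective (algebraMap_injective S f)]
  exact fun h ↦ hs0 (Ideal.multiset_prod_eq_bot.mpr (h ▸ hP))

end IsLocalization.Away

open IsLocalization.Away in
theorem Ideal.existsUnique_prime_factorization_of_sup_span_singleton_eq_top {R : Type*}
    (S : Type*) [CommRing R] [IsDomain R] [Ring.DimensionLEOne R] [CommRing S]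
    [IsDedekindDomain S] [Algebra R S] {f : R} [IsLocalization.Away f S] {a : Ideal R}
    (ha : a ≠ ⊥) (haf : a ⊔ Ideal.span {f} = ⊤) :
    ∃! s : Multiset (Ideal R), (∀ P ∈ s, P.IsPrime ∧ P ⊔ Ideal.span {f} = ⊤) ∧ s.prod = a := by
  classical
  have haS : a.map (algebraMap R S) ≠ ⊥ := by
    rwa [Ne, Ideal.map_eq_bot_iff_of_injective (algebraMap_injective S f)]
  set N := normalizedFactors (a.map (algebraMap R S))
  have hN : ∀ P ∈ N.map (Ideal.under R), P.IsPrime ∧ P ⊔ Ideal.span {f} = ⊤ := by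
    intro P hP
    obtain ⟨Q, hQ, rfl⟩ := Multiset.mem_map.mp hP
    have := Ideal.isPrime_of_prime (prime_of_normalized_factor Q hQ)
    exact ⟨Ideal.IsPrime.under R Q,
      under_sup_span_singleton_eq_top S Q (ne_zero_of_mem_normalizedFactors hQ)⟩
  refine ⟨N.map (Ideal.under R), ⟨hN, ?_⟩, fun s ⟨hs, hsa⟩ ↦ ?_⟩
  · have hNf : (N.map (Ideal.under R)).prod ⊔ Ideal.span {f} = ⊤ := by
      rw [sup_comm]
      exact Ideal.sup_multiset_prod_eq_top fun P hP ↦ by rw [sup_comm]; exact (hN P hP).2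
    have hNa : (N.map (Ideal.under R)).prod.map (algebraMap R S) = a.map (algebraMap R S) := by
      rw [Ideal.map_multiset_prod, Multiset.map_map,
        show Ideal.map (algebraMap R S) ∘ Ideal.under R = id from
          funext (IsLocalization.map_under (Submonoid.powers f) S), Multiset.map_id,
        Ideal.prod_normalizedFactors_eq_self haS]
    rw [← under_map_of_sup_span_singleton_eq_top S hNf, hNa,
      under_map_of_sup_span_singleton_eq_top S haf]
  · have hsN : s.map (Ideal.map (algebraMap R S)) = N := by
      rw [← normalizedFactors_map_prod S hs (hsa ▸ ha), hsa]
    rw [← hsN, Multiset.map_map]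
    nth_rw 1 [← Multiset.map_id s]
    exact Multiset.map_congr rfl fun P hP ↦
      (under_map_of_sup_span_singleton_eq_top S (hs P hP).2).symm

theorem stmt_14_general (K : Type*) [Field K] [NumberField K]
    (f : ℕ) (hf : 0 < f) (Of : Subring (𝓞 K))
    (hOf : ∀ x : 𝓞 K, x ∈ Of ↔ ∃ (m : ℤ) (y : 𝓞 K), x = m + f * y)
    (a : Ideal Of) (ha : a ≠ ⊥) (haf : a ⊔ Ideal.span {(f : Of)} = ⊤) :
    ∃! s : Multiset (Ideal Of),
      (∀ P ∈ s, P.IsPrime ∧ P ⊔ Ideal.span {(f : Of)} = ⊤) ∧ s.prod = a := by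
  have hf0 : (f : 𝓞 K) ≠ 0 := Nat.cast_ne_zero.mpr hf.ne'
  have := IsLocalization.Away.isDomain (S := Localization.Away (f : 𝓞 K)) hf0
  have := IsLocalization.isDedekindDomain (𝓞 K)
    (powers_le_nonZeroDivisors_of_noZeroDivisors hf0) (Localization.Away (f : 𝓞 K))
  have : Algebra.IsIntegral ℤ Of := .of_injective Of.subtype.toIntAlgHom Subtype.val_injective
  have : Ring.DimensionLEOne Of := .of_isIntegral ℤ Of
  have : IsLocalization.Away (f : Of) (Localization.Away (f : 𝓞 K)) :=
    .of_subring_of_mul_mem Of (f : Of) fun y ↦ (hOf _).mpr ⟨0, y, by simp⟩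
  exact Ideal.existsUnique_prime_factorization_of_sup_span_singleton_eq_top
    (Localization.Away (f : 𝓞 K)) ha haf

/-- In the order `O_f = ℤ + f·O_K` of conductor `f` in an imaginary quadratic field,
every nonzero `O_f`-ideal prime to `f` factors uniquely (as a multiset) into prime
`O_f`-ideals, each of which is also prime to `f`. -/
theorem stmt_14 (K : Type*) [Field K] [NumberField K]
    (h2 : Module.finrank ℚ K = 2) (him : IsEmpty (K →+* ℝ))
    (f : ℕ) (hf : 0 < f) (Of : Subring (𝓞 K))
    (hOf : ∀ x : 𝓞 K, x ∈ Of ↔ ∃ (m : ℤ) (y : 𝓞 K), x = m + f * y)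
    (a : Ideal Of) (ha : a ≠ ⊥) (haf : a ⊔ Ideal.span {(f : Of)} = ⊤) :
    ∃! s : Multiset (Ideal Of),
      (∀ P ∈ s, P.IsPrime ∧ P ⊔ Ideal.span {(f : Of)} = ⊤) ∧ s.prod = a :=
  stmt_14_general K f hf Of hOf a ha haf
end

section
/- Let F(x,y) = ax² + bxy + cy² be a primitive positive definite integral binary quadratic form of discriminant D = b² - 4ac, and let O be the order of discriminant D in the imaginary quadratic field K = ℚ(√D). Then the ℤ-module [a, (-b + √D)/2] = ℤ·a + ℤ·(-b+√D)/2 is a proper ideal of O. -/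
/-!
Put `τ = (-b + √D)/2`, a root of `X² + bX + ac`. Since `D ≡ b (mod 2)`, the order is
`O = ℤ + ℤτ`, and `𝔞 = ℤa + ℤτ` is an `O`-module because `τ·a = aτ` and `τ·τ = -ac - bτ`.
Conversely, as `1, τ` are `ℚ`-independent, an element `β = u + vτ` of `K` with `β𝔞 ⊆ 𝔞` has,
comparing coordinates of `βa` and `βτ`, `u ∈ ℤ` and `va, vb, vc ∈ ℤ`; primitivity forces
`v ∈ ℤ`, i.e. `β ∈ O`.
-/

def intLattice {R : Type*} [Ring R] (ω₁ ω₂ : R) : Set R :=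
  {z | ∃ m n : ℤ, z = m * ω₁ + n * ω₂}

theorem Int.exists_mul_add_mul_add_mul_eq_one {a b c : ℤ} (h : Int.gcd (Int.gcd a b) c = 1) :
    ∃ x y z : ℤ, a * x + b * y + c * z = 1 := by
  have hab := Int.gcd_eq_gcd_ab a b
  have habc := Int.gcd_eq_gcd_ab (Int.gcd a b : ℤ) c
  rw [h] at habc
  exact ⟨a.gcdA b * Int.gcdA (a.gcd b) c, a.gcdB b * Int.gcdA (a.gcd b) c, Int.gcdB (a.gcd b) c,
    by linear_combination -habc - Int.gcdA (a.gcd b) c * hab⟩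

theorem Rat.exists_intCast_eq_of_mul_intCast {v : ℚ} {a b c : ℤ}
    (h : Int.gcd (Int.gcd a b) c = 1) {m n p : ℤ} (ha : v * a = m) (hb : v * b = n)
    (hc : v * c = p) : ∃ N : ℤ, v = N := by
  obtain ⟨x, y, z, hxyz⟩ := Int.exists_mul_add_mul_add_mul_eq_one h
  have hxyz' : (a * x + b * y + c * z : ℚ) = 1 := by exact_mod_cast hxyz
  exact ⟨m * x + n * y + p * z,
    by push_cast; linear_combination x * ha + y * hb + z * hc - v * hxyz'⟩

theorem Complex.ofReal_add_ofReal_mul_inj {τ : ℂ} (hτ : τ.im ≠ 0) {x₁ y₁ x₂ y₂ : ℝ}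
    (h : (x₁ : ℂ) + y₁ * τ = x₂ + y₂ * τ) : x₁ = x₂ ∧ y₁ = y₂ := by
  have him := congrArg Complex.im h
  have hre := congrArg Complex.re h
  simp only [Complex.add_re, Complex.add_im, Complex.ofReal_re, Complex.ofReal_im,
    Complex.re_ofReal_mul, Complex.im_ofReal_mul, zero_add] at him hre
  obtain rfl : y₁ = y₂ := mul_right_cancel₀ hτ him
  exact ⟨by linarith, rfl⟩

theorem Complex.I_mul_sqrt_neg_sq {x : ℝ} (hx : x ≤ 0) : (I * Real.sqrt (-x)) ^ 2 = x := by
  rw [mul_pow, I_sq, ← ofReal_pow, Real.sq_sqrt (neg_nonneg.mpr hx)]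
  push_cast
  ring

namespace intLattice

theorem one_add_intCast {R : Type*} [CommRing R] (τ : R) (k : ℤ) :
    intLattice 1 (τ + k) = intLattice 1 τ := by
  ext z
  constructor
  · rintro ⟨m, n, rfl⟩
    exact ⟨m + n * k, n, by push_cast; ring⟩
  · rintro ⟨m, n, rfl⟩
    exact ⟨m - n * k, n, by push_cast; ring⟩

theorem one_discr_add_div_two (a b c : ℤ) (s : ℂ) :
    intLattice 1 ((((b ^ 2 - 4 * a * c : ℤ) : ℂ) + s) / 2) =
      intLattice 1 ((-(b : ℂ) + s) / 2) := by
  obtain ⟨k, hk⟩ : ∃ k : ℤ, b ^ 2 - 4 * a * c + b = 2 * k := by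
    rw [← even_iff_exists_two_mul, show b ^ 2 - 4 * a * c + b = b * (b + 1) - 4 * a * c by ring]
    exact (Int.even_mul_succ_self b).sub ⟨2 * a * c, by ring⟩
  have hkC : ((b ^ 2 - 4 * a * c : ℤ) : ℂ) + b = 2 * k := by exact_mod_cast hk
  rw [show (((b ^ 2 - 4 * a * c : ℤ) : ℂ) + s) / 2 = (-(b : ℂ) + s) / 2 + k by
    linear_combination hkC / 2, one_add_intCast]

theorem mul_mem {R : Type*} [CommRing R] {a b c : ℤ} {τ : R} (hτ : τ ^ 2 + b * τ + a * c = 0)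
    {o x : R} (ho : o ∈ intLattice 1 τ) (hx : x ∈ intLattice (a : R) τ) :
    o * x ∈ intLattice (a : R) τ := by
  obtain ⟨m, n, rfl⟩ := ho
  obtain ⟨p, q, rfl⟩ := hx
  exact ⟨m * p - n * q * c, m * q + n * p * a - n * q * b,
    by push_cast; linear_combination n * q * hτ⟩

theorem mem_one_of_mul_mem {a b c : ℤ} {τ : ℂ} (hτ : τ ^ 2 + b * τ + a * c = 0)
    (hτ_im : τ.im ≠ 0) (hgcd : Int.gcd (Int.gcd a b) c = 1) (ha : a ≠ 0) {u v : ℚ}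
    (h : ∀ x ∈ intLattice (a : ℂ) τ, ((u : ℂ) + v * τ) * x ∈ intLattice (a : ℂ) τ) :
    (u : ℂ) + v * τ ∈ intLattice 1 τ := by
  have ha' : (a : ℚ) ≠ 0 := Int.cast_ne_zero.mpr ha
  obtain ⟨m, n, hβa⟩ := h a ⟨1, 0, by simp⟩
  obtain ⟨m', n', hβτ⟩ := h τ ⟨0, 1, by simp⟩
  obtain ⟨hua, hva⟩ := Complex.ofReal_add_ofReal_mul_inj hτ_im
    (x₁ := u * a) (y₁ := v * a) (x₂ := m * a) (y₂ := n) (by push_cast; linear_combination hβa)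
  obtain ⟨hvc, hvb⟩ := Complex.ofReal_add_ofReal_mul_inj hτ_im
    (x₁ := -(v * c) * a) (y₁ := u - v * b) (x₂ := m' * a) (y₂ := n')
    (by push_cast; linear_combination hβτ - v * hτ)
  obtain rfl : u = m := mul_right_cancel₀ ha' (by exact_mod_cast hua)
  have hvb' : (m : ℚ) - v * b = n' := by exact_mod_cast hvb
  have hvc' : -(v * c) = (m' : ℚ) := mul_right_cancel₀ ha' (by exact_mod_cast hvc)
  obtain ⟨N, rfl⟩ := Rat.exists_intCast_eq_of_mul_intCast hgcd (m := n) (n := m - n') (p := -m')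
    (by exact_mod_cast hva) (by push_cast; linear_combination -hvb')
    (by push_cast; linear_combination -hvc')
  exact ⟨m, N, by push_cast; ring⟩

end intLattice

/-- Let `F(x,y) = ax² + bxy + cy²` be a primitive positive definite integral binary
quadratic form of discriminant `D = b² - 4ac < 0`.  Inside `ℂ` put `√D = i√(-D)`,
let `O = ℤ·1 + ℤ·(D+√D)/2 ⊂ ℂ` be the order of discriminant `D` in
`K = ℚ(√D) = {q + r√D : q, r ∈ ℚ}`, and let `𝔞 = ℤ·a + ℤ·(-b+√D)/2`.  Then `𝔞` is
a proper ideal of `O`: it is closed under multiplication by elements of `O`, and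
`{β ∈ K : β𝔞 ⊆ 𝔞} = O`. -/
theorem stmt_18 (a b c : ℤ) (hprim : Int.gcd (Int.gcd a b) c = 1) (hpos : 0 < a)
    (D : ℤ) (hD : D = b ^ 2 - 4 * a * c) (hDneg : D < 0)
    (sqrtD : ℂ) (hsqrtD : sqrtD = Complex.I * Real.sqrt (-D))
    (O : Set ℂ) (hO : O = {z | ∃ m n : ℤ, z = m + n * (((D : ℂ) + sqrtD) / 2)})
    (A : Set ℂ) (hA : A = {z | ∃ m n : ℤ, z = m * a + n * ((-(b : ℂ) + sqrtD) / 2)}) :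
    (∀ o ∈ O, ∀ x ∈ A, o * x ∈ A) ∧
    {β : ℂ | (∃ q r : ℚ, β = q + r * sqrtD) ∧ ∀ x ∈ A, β * x ∈ A} = O := by
  set τ : ℂ := (-(b : ℂ) + sqrtD) / 2 with hτ_def
  have hτ : τ ^ 2 + b * τ + a * c = 0 := by
    have hsq : sqrtD ^ 2 = D := by
      rw [hsqrtD, Complex.I_mul_sqrt_neg_sq (by exact_mod_cast hDneg.le)]
      push_cast; ring
    rw [hτ_def]
    linear_combination hsq / 4 + (by exact_mod_cast hD : (D : ℂ) = b ^ 2 - 4 * a * c) / 4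
  have hτ_im : τ.im ≠ 0 := by
    simpa [hτ_def, hsqrtD] using (Real.sqrt_pos.mpr (by exact_mod_cast neg_pos.mpr hDneg)).ne'
  have hO' : O = intLattice 1 τ := by
    rw [hO, ← intLattice.one_discr_add_div_two a b c sqrtD, ← hD]
    simp only [intLattice, mul_one]
  change A = intLattice (a : ℂ) τ at hA
  subst hO' hA
  refine ⟨fun o ho x hx => intLattice.mul_mem hτ ho hx, Set.ext fun β => ⟨?_, ?_⟩⟩
  · rintro ⟨⟨q, r, rfl⟩, hβ⟩
    have hβτ : (q : ℂ) + r * sqrtD = ((q + r * b : ℚ) : ℂ) + ((2 * r : ℚ) : ℂ) * τ := by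
      push_cast; ring
    rw [hβτ] at hβ ⊢
    exact intLattice.mem_one_of_mul_mem hτ hτ_im hprim hpos.ne' hβ
  · intro hβ
    refine ⟨?_, fun x hx => intLattice.mul_mem hτ hβ hx⟩
    obtain ⟨m, n, rfl⟩ := hβ
    exact ⟨m - n * b / 2, n / 2, by push_cast; ring⟩
end
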